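/- arXiv:1903.07315 — 11 statements merged into one kernel-verified Lean document; each statement's English description precedes it below -/
import Mathlib

section
/- For any summable real sequence a, the sequence R(a) obtained by applying the transfer operators R_j in increasing order of j satisfies R(a)_i = min(1, (∑_{j ≤ i} a_j) − ∑_{j < i} R(a)_j) for every i. -/
/-!
Each `R_j` only moves mass from cell `j` to cell `j + 1`, after which cell `j` is never touched
again. Hence, once `R_m, …, R_n` have been applied, the cells beyond `n + 1` still hold `a`, and
by conservation of mass cell `n + 1` holds the total mass of `a` up to `n + 1` minus the final
values of the cells up to `n`. The operator `R_{n+1}` then truncates this content at `1`.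
-/

/-- The cell-transfer operator `R_j`: it transfers the excess content (above
capacity 1) of cell `j` to cell `j+1`, leaving all other cells unchanged. -/
noncomputable def Rj (j : ℤ) (a : ℤ → ℝ) : ℤ → ℝ := fun i =>
  if i = j then min 1 (a j)
  else if i = j + 1 then a (j + 1) + a j - min 1 (a j)
  else a i

/-- The composition `R_n ∘ ⋯ ∘ R_{m+1} ∘ R_m` of the transfer operators,
applied in increasing order of the index. -/
noncomputable def Rcomp (m n : ℤ) (a : ℤ → ℝ) : ℤ → ℝ :=
  ((Finset.Icc m n).sort (· ≤ ·)).foldl (fun s j => Rj j s) a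

theorem Finset.sum_Icc_add_one_right {α M : Type*} [LinearOrder α] [One α] [Add α]
    [LocallyFiniteOrder α] [SuccAddOrder α] [NoMaxOrder α] [AddCommMonoid M] {a b : α}
    (h : a ≤ b + 1) (f : α → M) :
    ∑ j ∈ Icc a (b + 1), f j = ∑ j ∈ Icc a b, f j + f (b + 1) := by
  have hb : b + 1 ∉ Icc a b := fun hb =>
    (Order.lt_succ b).not_ge (Order.succ_eq_add_one b ▸ (mem_Icc.1 hb).2)
  rw [← insert_Icc_right_eq_Icc_add_one h, sum_insert hb, add_comm]

theorem Finset.sort_insert_of_forall_lt {α : Type*} [LinearOrder α] {s : Finset α} {a : α}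
    (h : ∀ b ∈ s, b < a) : (insert a s).sort = s.sort ++ [a] := by
  have ha : a ∉ s := fun ha => (h a ha).false
  refine List.Perm.eq_of_pairwise' (pairwise_sort _ _) ?_ ?_
  · refine List.pairwise_append.2 ⟨pairwise_sort _ _, List.pairwise_singleton _ _, ?_⟩
    simpa using fun b hb => (h b hb).le
  · refine (List.perm_ext_iff_of_nodup (sort_nodup _ _) ?_).2 fun b => by simp [or_comm]
    exact List.nodup_append.2 ⟨sort_nodup _ _, List.nodup_singleton a, by simpa using ha⟩

theorem finsum_mem_Iic_eq_sum_Icc {α M : Type*} [LinearOrder α] [LocallyFiniteOrder α]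
    [AddCommMonoid M] {f : α → M} {m : α} (hf : ∀ j < m, f j = 0) (i : α) :
    ∑ᶠ j ∈ Set.Iic i, f j = ∑ j ∈ Finset.Icc m i, f j := by
  refine finsum_mem_eq_sum_of_subset f (fun j ⟨hji, hj⟩ => ?_) fun j hj => ?_
  · exact Finset.mem_coe.2 (Finset.mem_Icc.2 ⟨not_lt.1 fun hjm => hj (hf j hjm), hji⟩)
  · exact (Finset.mem_Icc.1 hj).2

namespace Rj

variable (j : ℤ) (a : ℤ → ℝ)

theorem apply_self : Rj j a j = min 1 (a j) := if_pos rfl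

theorem apply_add_one : Rj j a (j + 1) = a (j + 1) + a j - min 1 (a j) := by
  simp [Rj]

theorem apply_of_ne {i : ℤ} (h₁ : i ≠ j) (h₂ : i ≠ j + 1) : Rj j a i = a i := by
  simp [Rj, h₁, h₂]

end Rj

namespace Rcomp

variable {m : ℤ} (a : ℤ → ℝ)

theorem of_lt {n : ℤ} (h : n < m) : Rcomp m n a = a := by
  simp [Rcomp, Finset.Icc_eq_empty_of_lt h]

theorem add_one {n : ℤ} (h : m ≤ n + 1) : Rcomp m (n + 1) a = Rj (n + 1) (Rcomp m n a) := by
  rw [Rcomp, ← Finset.insert_Icc_right_eq_Icc_add_one h,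
    Finset.sort_insert_of_forall_lt fun b hb => by simp only [Finset.mem_Icc] at hb; omega,
    List.foldl_append]
  rfl

theorem apply_of_add_one_lt {n i : ℤ} (h : n + 1 < i) : Rcomp m n a i = a i := by
  rcases lt_or_ge n m with hnm | hmn
  · rw [of_lt a hnm]
  replace hmn : m - 1 ≤ n := by omega
  induction n, hmn using Int.leInduction with
  | base => rw [of_lt a (by omega)]
  | succ n _ ih =>
    rw [add_one a (by omega), Rj.apply_of_ne _ _ (by omega) (by omega), ih (by omega)]

theorem apply_add_one_self {n : ℤ} (h : m ≤ n + 1) :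
    Rcomp m (n + 1) a (n + 1) = min 1 (Rcomp m n a (n + 1)) := by
  rw [add_one a h, Rj.apply_self]

theorem apply_add_one {n : ℤ} (h : m - 1 ≤ n) :
    Rcomp m n a (n + 1) =
      ∑ j ∈ Finset.Icc m (n + 1), a j - ∑ j ∈ Finset.Icc m n, Rcomp m j a j := by
  induction n, h using Int.leInduction with
  | base => simp [of_lt a (show m - 1 < m by omega)]
  | succ n _ ih =>
    rw [add_one a (by omega), Rj.apply_add_one, apply_of_add_one_lt a (by omega),
      ← apply_add_one_self a (by omega), ih, Finset.sum_Icc_add_one_right (b := n + 1) (by omega),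
      Finset.sum_Icc_add_one_right (b := n) (f := fun j => Rcomp m j a j) (by omega)]
    ring

end Rcomp

/-- `R(a) i` is `Rcomp m i a i`: the operators `R_j` with `j > i` no longer change cell `i`, and
those with `j < m` act trivially. -/
theorem stmt_1_general (a : ℤ → ℝ)
    (m : ℤ) (hm : ∀ j < m, a j = 0) :
    ∀ i : ℤ, Rcomp m i a i =
      min 1 ((∑ᶠ j ∈ Set.Iic i, a j) - ∑ᶠ j ∈ Set.Iio i, Rcomp m j a j) := by
  intro i
  obtain ⟨n, rfl⟩ : ∃ n, i = n + 1 := ⟨i - 1, by ring⟩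
  have hkept : ∀ j < m, Rcomp m j a j = 0 := fun j hj => by rw [Rcomp.of_lt a hj, hm j hj]
  rw [finsum_mem_Iic_eq_sum_Icc hm, Set.Iio_add_one_eq_Iic, finsum_mem_Iic_eq_sum_Icc hkept]
  rcases lt_or_ge (n + 1) m with hnm | hmn
  · simp [Rcomp.of_lt a hnm, hm _ hnm, Finset.Icc_eq_empty_of_lt hnm,
      Finset.Icc_eq_empty_of_lt (show n < m by omega)]
  · rw [Rcomp.apply_add_one_self a hmn, Rcomp.apply_add_one a (by omega)]

/-- For any finitely supported real sequence `a` (with support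
bounded below by `m`), the sequence `R(a)` obtained by applying the transfer
operators `R_j` in increasing order of `j` (the value `R(a) i` is stable once
all `R_j` with `j ≤ i` have been applied, i.e. `R(a) i = Rcomp m i a i`)
satisfies `R(a) i = min (1, (∑_{j ≤ i} a j) − ∑_{j < i} R(a) j)` for every `i`. -/
theorem stmt_1 (a : ℤ → ℝ) (hfin : (Function.support a).Finite)
    (m : ℤ) (hm : ∀ j < m, a j = 0) :
    ∀ i : ℤ, Rcomp m i a i =
      min 1 ((∑ᶠ j ∈ Set.Iic i, a j) - ∑ᶠ j ∈ Set.Iio i, Rcomp m j a j) :=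
  stmt_1_general a m hm
end

section
/- If a finitely supported real sequence (U^t_i) evolves under the udKdV update rule, then the new state is given by U^{t+1}_i = R(a)_i − U^t_i, where a is the sequence a_i = U^t_{i−1} + U^t_i and R is the cell-transfer operator. -/
/-!
Write `u = U^t`, `w = U^{t+1}` and `carry u w i = ∑_{j<i} (u j - w j)` for the load of the carrier
on arrival at cell `i`, so that the update rule reads `w i + u i = min 1 (u i + carry u w i)`.
Inductively, `R_{i-1} ∘ ⋯ ∘ R_m` leaves `a k` unchanged for `k > i` and has put
`u i + carry u w i` into cell `i`; `R_i` then keeps `min 1 (u i + carry u w i) = w i + u i` there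
and passes the rest on, which makes cell `i + 1` equal to `u (i + 1) + carry u w (i + 1)`.
The induction starts at `m` with an empty carrier: below `m` both `w` and the carry vanish, by an
upward induction from a common lower bound of the two finite supports.
-/

theorem Finset.sort_Icc_eq_append {m n : ℤ} (h : m ≤ n) :
    (Icc m n).sort (· ≤ ·) = (Icc m (n - 1)).sort (· ≤ ·) ++ [n] := by
  refine (sortedLT_sort _).eq_of_mem_iff ?_ fun k => ?_
  · refine (List.pairwise_append.2
      ⟨(sortedLT_sort _).pairwise, List.pairwise_singleton _ _, ?_⟩).sortedLT
    simp only [mem_sort, mem_Icc, List.mem_singleton]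
    omega
  · simp only [List.mem_append, mem_sort, mem_Icc, List.mem_singleton]
    omega

section Transfer

variable (a : ℤ → ℝ)

theorem Rj_apply_self (j : ℤ) : Rj j a j = min 1 (a j) := if_pos rfl

theorem Rj_apply_add_one (j : ℤ) : Rj j a (j + 1) = a (j + 1) + a j - min 1 (a j) := by
  simp [Rj]

theorem Rj_apply_of_lt {j k : ℤ} (h : j + 1 < k) : Rj j a k = a k := by
  simp [Rj, show k ≠ j by omega, show k ≠ j + 1 by omega]

theorem Rcomp_of_lt {m n : ℤ} (h : n < m) : Rcomp m n a = a := by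
  simp [Rcomp, Finset.Icc_eq_empty_of_lt h]

theorem Rcomp_eq_Rj_Rcomp_sub_one {m n : ℤ} (h : m ≤ n) :
    Rcomp m n a = Rj n (Rcomp m (n - 1) a) := by
  simp [Rcomp, Finset.sort_Icc_eq_append h]

end Transfer

theorem finsum_mem_Iio_add_one {α M : Type*} [LinearOrder α] [Add α] [One α] [SuccAddOrder α]
    [NoMaxOrder α] [AddCommMonoid M] {f : α → M} (hf : (Function.support f).Finite) (i : α) :
    ∑ᶠ j ∈ Set.Iio (i + 1), f j = ∑ᶠ j ∈ Set.Iio i, f j + f i := by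
  rw [Set.Iio_add_one_eq_Iic, ← Set.Iio_insert, finsum_mem_insert' _ Set.self_notMem_Iio
    (hf.inter_of_right _), add_comm]

namespace UdKdV

noncomputable def carry (u w : ℤ → ℝ) (i : ℤ) : ℝ := ∑ᶠ j ∈ Set.Iio i, (u j - w j)

variable {u w : ℤ → ℝ} (hu : (Function.support u).Finite) (hw : (Function.support w).Finite)
  (hup : ∀ i, w i = min (1 - u i) (carry u w i)) {m : ℤ} (hm : ∀ j < m, u j = 0)

include hu hw in
theorem carry_add_one (i : ℤ) : carry u w (i + 1) = carry u w i + (u i - w i) :=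
  finsum_mem_Iio_add_one ((hu.union hw).subset (Function.support_sub u w)) i

include hup in
theorem add_eq_min_carry (i : ℤ) : w i + u i = min 1 (u i + carry u w i) := by
  rw [hup i, ← min_add_add_right]
  congr 1 <;> ring

include hu hw hup hm in
theorem carry_eq_zero_of_le {i : ℤ} (hi : i ≤ m) : carry u w i = 0 := by
  obtain ⟨b, hb⟩ := (hu.union hw).bddBelow
  have hvanish : ∀ j < min b m, u j = 0 ∧ w j = 0 := fun j hj => by
    have : j ∉ Function.support u ∪ Function.support w := fun h => by
      have := hb h
      omega
    simpa [not_or] using this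
  have hcarry : ∀ k ≤ min b m, carry u w k = 0 := fun k hk =>
    finsum_mem_of_eqOn_zero fun j hj => by simp [hvanish j (lt_of_lt_of_le hj hk)]
  rcases le_total i (min b m) with h | h
  · exact hcarry i h
  induction i, h using Int.leInduction with
  | base => exact hcarry _ le_rfl
  | succ n _ ih =>
    have hn : carry u w n = 0 := ih (by omega)
    rw [carry_add_one hu hw, hn, hup n, hn, hm n (by omega)]
    norm_num

include hu hw hup hm in
theorem next_eq_zero_of_lt {j : ℤ} (hj : j < m) : w j = 0 := by
  rw [hup, carry_eq_zero_of_le hu hw hup hm hj.le, hm j hj]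
  norm_num

include hu hw hup hm in
theorem Rcomp_sub_one_apply {n : ℤ} (hn : m ≤ n) :
    Rcomp m (n - 1) (fun k => u (k - 1) + u k) n = u n + carry u w n ∧
      ∀ k, n < k → Rcomp m (n - 1) (fun k => u (k - 1) + u k) k = u (k - 1) + u k := by
  induction n, hn using Int.leInduction with
  | base =>
    rw [Rcomp_of_lt _ (sub_one_lt m), carry_eq_zero_of_le hu hw hup hm le_rfl, hm _ (sub_one_lt m)]
    exact ⟨by ring, fun _ _ => rfl⟩
  | succ n hn ih =>
    obtain ⟨hcur, hrest⟩ := ih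
    rw [add_sub_cancel_right, Rcomp_eq_Rj_Rcomp_sub_one _ hn]
    refine ⟨?_, fun k hk => ?_⟩
    · rw [Rj_apply_add_one, hcur, hrest _ (lt_add_one n), ← add_eq_min_carry hup,
        carry_add_one hu hw, add_sub_cancel_right]
      ring
    · rw [Rj_apply_of_lt _ hk, hrest _ (by omega)]

include hu hw hup hm in
theorem next_eq_Rcomp_apply_sub (i : ℤ) :
    w i = Rcomp m i (fun k => u (k - 1) + u k) i - u i := by
  rcases lt_or_ge i m with hi | hi
  · rw [Rcomp_of_lt _ hi, next_eq_zero_of_lt hu hw hup hm hi, hm i hi, hm (i - 1) (by omega)]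
    ring
  · rw [Rcomp_eq_Rj_Rcomp_sub_one _ hi, Rj_apply_self, (Rcomp_sub_one_apply hu hw hup hm hi).1,
      ← add_eq_min_carry hup]
    ring

end UdKdV

/-- If a finitely supported real state `U^t` evolves under the
udKdV update rule, then `U^{t+1}_i = R(a)_i − U^t_i` where `a_i = U^t_{i−1} + U^t_i`
and `R` is the cell-transfer operator (whose value at `i` is `Rcomp m i a i` for
`m` below the support). -/
theorem stmt_3 (U : ℤ → ℤ → ℝ)
    (hfin : ∀ t, (Function.support (U t)).Finite)
    (hup : ∀ t i, U (t + 1) i =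
      min (1 - U t i) (∑ᶠ j ∈ Set.Iio i, (U t j - U (t + 1) j)))
    (t m : ℤ) (hm : ∀ j < m, U t j = 0) :
    ∀ i : ℤ, U (t + 1) i =
      Rcomp m i (fun k => U t (k - 1) + U t k) i - U t i :=
  UdKdV.next_eq_Rcomp_apply_sub (hfin t) (hfin (t + 1)) (hup t) hm
end

section
/- The total mass ∑_{i∈ℤ} U^t_i of a finitely supported solution of the udKdV update rule is independent of t. -/
/-!
At a site `i` to the right of the supports of `U^t` and `U^{t+1}`, the update rule reads
`0 = min 1 (∑_{j<i} (U^t_j - U^{t+1}_j))`, and the sum there is the whole difference of the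
total masses; since `1 ≠ 0`, that difference vanishes.
-/

open Function Set

theorem finsum_mem_eq_finsum_of_support_subset {α M : Type*} [AddCommMonoid M] (f : α → M)
    {s : Set α} (h : support f ⊆ s) : ∑ᶠ i ∈ s, f i = ∑ᶠ i, f i := by
  rw [← finsum_mem_univ f]
  exact finsum_mem_inter_support_eq' f s univ fun x hx => by simp [h hx]

def IsUdKdVStep (u v : ℤ → ℝ) : Prop :=
  ∀ i, v i = min (1 - u i) (∑ᶠ j ∈ Iio i, (u j - v j))

theorem IsUdKdVStep.finsum_eq {u v : ℤ → ℝ} (huv : IsUdKdVStep u v)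
    (hu : (support u).Finite) (hv : (support v).Finite) : ∑ᶠ i, v i = ∑ᶠ i, u i := by
  obtain ⟨b, hb⟩ := (hu.union hv).bddAbove
  have hvanish : ∀ {w : ℤ → ℝ}, support w ⊆ support u ∪ support v → w (b + 1) = 0 :=
    fun hw => notMem_support.mp fun h => by have := hb (hw h); omega
  have hdiff : support (fun j => u j - v j) ⊆ Iio (b + 1) :=
    fun j hj => Int.lt_add_one_iff.mpr (hb (support_sub u v hj))
  have hmin := huv (b + 1)
  rw [hvanish subset_union_left, hvanish subset_union_right, sub_zero,
    finsum_mem_eq_finsum_of_support_subset _ hdiff, eq_comm, min_eq_iff] at hmin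
  have htotal : ∑ᶠ j, (u j - v j) = 0 := by rcases hmin with h | h <;> linarith [h.1]
  rw [finsum_sub_distrib hu hv] at htotal
  linarith

/-- The total mass `∑_{i∈ℤ} U^t_i` of a finitely supported
solution of the udKdV update rule is independent of `t`. -/
theorem stmt_4 (U : ℤ → ℤ → ℝ)
    (hfin : ∀ t, (Function.support (U t)).Finite)
    (hup : ∀ t i, U (t + 1) i =
      min (1 - U t i) (∑ᶠ j ∈ Set.Iio i, (U t j - U (t + 1) j))) :
    ∀ s t : ℤ, ∑ᶠ i, U s i = ∑ᶠ i, U t i := by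
  have hmass : Periodic (fun t => ∑ᶠ i, U t i) 1 := fun t =>
    IsUdKdVStep.finsum_eq (hup t) (hfin t) (hfin (t + 1))
  intro s t
  simpa using hmass.int_mul (s - t) t
end

section
/- Let U^t satisfy the udKdV update rule and define V^t = max_i (U^t_i + U^t_{i+1}). Then V^t ≤ 1 if and only if U^{t+1}_i = U^t_{i−1} for all i; moreover if V^t ≤ 1 then V^{t+1} = V^t. -/
/-! Write `u = U t`, `w = U (t + 1)`. The carry `∑_{j<i} (u j - w j)` telescopes to `u (i - 1)`
exactly when `w` agrees with the shift of `u` to the left of `i`. Hence, if `w` is the shift, the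
update rule at `i + 1` reads `u i = min (1 - u (i + 1)) (u i)`, i.e. `u i + u (i + 1) ≤ 1`.
Conversely, if all adjacent sums are at most `1`, the leftmost site where `w` would differ from the
shift receives carry `u (m - 1) ≤ 1 - u m`, so the update gives `w m = u (m - 1)` after all.
A shift does not change the supremum of adjacent sums. -/

open Function Set

section Telescoping

variable {M : Type*} [AddCommGroup M] {u : ℤ → M}

lemma finsum_mem_Iio_eq_add (hu : u.support.Finite) (i : ℤ) :
    ∑ᶠ j ∈ Iio i, u j = ∑ᶠ j ∈ Iio (i - 1), u j + u (i - 1) := by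
  have : Iio i = insert (i - 1) (Iio (i - 1)) := by
    ext j; simp only [mem_Iio, mem_insert_iff]; omega
  rw [this, finsum_mem_insert' u (by simp) (hu.inter_of_right _), add_comm]

lemma finsum_mem_Iio_comp_sub_one (i : ℤ) :
    ∑ᶠ j ∈ Iio i, u (j - 1) = ∑ᶠ j ∈ Iio (i - 1), u j :=
  finsum_mem_eq_of_bijOn (· - 1)
    ⟨fun j hj => by simp_all, fun _ _ _ _ h => by simpa using h,
      fun k hk => ⟨k + 1, by simp_all; omega, by simp⟩⟩ fun _ _ => rfl

lemma finsum_mem_Iio_sub_comp_sub_one (hu : u.support.Finite) (i : ℤ) :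
    ∑ᶠ j ∈ Iio i, (u j - u (j - 1)) = u (i - 1) := by
  have hu' : (support fun j => -u (j - 1)).Finite := by
    rw [support_fun_neg]
    exact hu.preimage sub_left_injective.injOn
  simp only [sub_eq_add_neg (u _) (u _)]
  rw [finsum_mem_add_distrib' (hu.inter_of_right _) (hu'.inter_of_right _)]
  simp only [finsum_neg_distrib]
  rw [finsum_mem_Iio_comp_sub_one, finsum_mem_Iio_eq_add hu]
  abel

end Telescoping

lemma bddAbove_range_of_support_finite {ι α : Type*} [Zero α] [Preorder α] [IsDirectedOrder α]
    {f : ι → α} (hf : f.support.Finite) : BddAbove (range f) :=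
  (((hf.image f).insert 0).subset (range_subset_insert_image_support f)).bddAbove

section UdKdV

variable {u w : ℤ → ℝ}

lemma finsum_mem_Iio_sub_eq_of_eq_shift (hu : u.support.Finite) {i : ℤ}
    (hshift : ∀ j < i, w j = u (j - 1)) : ∑ᶠ j ∈ Iio i, (u j - w j) = u (i - 1) := by
  rw [← finsum_mem_Iio_sub_comp_sub_one hu i]
  exact finsum_mem_congr rfl fun j hj => by rw [hshift j hj]

lemma add_succ_le_one_of_eq_shift (hu : u.support.Finite)
    (hstep : ∀ i, w i = min (1 - u i) (∑ᶠ j ∈ Iio i, (u j - w j)))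
    (hshift : ∀ i, w i = u (i - 1)) (i : ℤ) : u i + u (i + 1) ≤ 1 := by
  have h := hstep (i + 1)
  rw [hshift, finsum_mem_Iio_sub_eq_of_eq_shift hu fun j _ => hshift j, add_sub_cancel_right] at h
  linarith [h.symm ▸ min_le_left (1 - u (i + 1)) (u i)]

lemma eq_shift_of_add_succ_le_one (hu : u.support.Finite) (hw : w.support.Finite)
    (hstep : ∀ i, w i = min (1 - u i) (∑ᶠ j ∈ Iio i, (u j - w j)))
    (hle : ∀ i, u i + u (i + 1) ≤ 1) (i : ℤ) : w i = u (i - 1) := by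
  by_contra hi
  have hfinite : {j | w j ≠ u (j - 1)}.Finite := by
    refine (hw.union (hu.preimage (sub_left_injective (b := 1)).injOn)).subset fun j hj => ?_
    by_contra hj'
    simp only [mem_union, mem_preimage, mem_support, not_or, not_not] at hj'
    exact hj (hj'.1.trans hj'.2.symm)
  obtain ⟨b, hb⟩ := hfinite.bddBelow
  obtain ⟨m, hm, hmin⟩ := Int.exists_least_of_bdd ⟨b, fun j hj => hb hj⟩ ⟨i, hi⟩
  have hcarry : ∑ᶠ j ∈ Iio m, (u j - w j) = u (m - 1) :=
    finsum_mem_Iio_sub_eq_of_eq_shift hu fun j hj => by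
      by_contra h
      exact absurd (hmin j h) (not_le.2 hj)
  have hle' : u (m - 1) ≤ 1 - u m := by linarith [sub_add_cancel m 1 ▸ hle (m - 1)]
  exact hm (by rw [hstep, hcarry, min_eq_right hle'])

lemma eq_shift_iff_add_succ_le_one (hu : u.support.Finite) (hw : w.support.Finite)
    (hstep : ∀ i, w i = min (1 - u i) (∑ᶠ j ∈ Iio i, (u j - w j))) :
    (∀ i, w i = u (i - 1)) ↔ ∀ i, u i + u (i + 1) ≤ 1 :=
  ⟨add_succ_le_one_of_eq_shift hu hstep, eq_shift_of_add_succ_le_one hu hw hstep⟩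

end UdKdV

/-- Let `U^t` satisfy the udKdV update rule and define
`V^t = max_i (U^t_i + U^t_{i+1})`. Then `V^t ≤ 1` if and only if
`U^{t+1}_i = U^t_{i−1}` for all `i`; moreover if `V^t ≤ 1` then `V^{t+1} = V^t`. -/
theorem stmt_5 (U : ℤ → ℤ → ℝ)
    (hfin : ∀ t, (Function.support (U t)).Finite)
    (hup : ∀ t i, U (t + 1) i =
      min (1 - U t i) (∑ᶠ j ∈ Set.Iio i, (U t j - U (t + 1) j)))
    (V : ℤ → ℝ) (hV : ∀ t, V t = ⨆ i : ℤ, (U t i + U t (i + 1)))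
    (t : ℤ) :
    (V t ≤ 1 ↔ ∀ i : ℤ, U (t + 1) i = U t (i - 1)) ∧
    (V t ≤ 1 → V (t + 1) = V t) := by
  have hsupp : (support fun i => U t i + U t (i + 1)).Finite :=
    ((hfin t).union ((hfin t).preimage (add_left_injective 1).injOn)).subset (support_add _ _)
  have hiff : V t ≤ 1 ↔ ∀ i, U (t + 1) i = U t (i - 1) := by
    rw [hV, ciSup_le_iff (bddAbove_range_of_support_finite hsupp),
      eq_shift_iff_add_succ_le_one (hfin t) (hfin (t + 1)) (hup t)]
  refine ⟨hiff, fun hle => ?_⟩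
  have hshift := hiff.1 hle
  have hpairs : ∀ i, U (t + 1) i + U (t + 1) (i + 1) = U t (i - 1) + U t (i - 1 + 1) := by
    intro i
    rw [hshift, hshift, add_sub_cancel_right, sub_add_cancel]
  rw [hV, hV]
  simp only [hpairs]
  exact (Equiv.subRight 1).iSup_comp (g := fun i => U t i + U t (i + 1))
end

section
/- If U^t satisfies the udKdV update rule, then for all i and t one has Y^t_i ≥ 0 and U^t_i + U^{t−1}_i ≤ 1, where Y^t_i := ∑_{j>i} U^t_j − ∑_{j≥i} U^{t−1}_j. Moreover Y^t_i > 0 implies U^t_i + U^{t−1}_i = 1. -/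
open Set Function

lemma finsum_mem_neg' {s : Set ℤ} (g : ℤ → ℝ) :
    ∑ᶠ j ∈ s, (-g j) = -∑ᶠ j ∈ s, g j := by
  rw [finsum_mem_def, finsum_mem_def, ← finsum_neg_distrib]
  congr 1
  ext j
  by_cases hj : j ∈ s <;> simp [hj]

lemma finsum_mem_sub' {s : Set ℤ} (f g : ℤ → ℝ)
    (hf : (s ∩ support f).Finite) (hg : (s ∩ support g).Finite) :
    ∑ᶠ j ∈ s, (f j - g j) = (∑ᶠ j ∈ s, f j) - ∑ᶠ j ∈ s, g j := by
  have : ∀ j, f j - g j = f j + (-g j) := fun j => sub_eq_add_neg _ _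
  simp_rw [this]
  rw [finsum_mem_add_distrib' hf (by simpa using hg), finsum_mem_neg' g, ← sub_eq_add_neg]

/-- For a finitely supported udKdV solution (satisfying both the
update and downdate rules), for all `i` and `t` one has `Y^t_i ≥ 0` and
`U^t_i + U^{t−1}_i ≤ 1`, where `Y^t_i := ∑_{j>i} U^t_j − ∑_{j≥i} U^{t−1}_j`.
Moreover `Y^t_i > 0` implies `U^t_i + U^{t−1}_i = 1`. -/
theorem stmt_6 (U : ℤ → ℤ → ℝ)
    (hfin : ∀ t, (Function.support (U t)).Finite)
    (hup : ∀ t i, U (t + 1) i =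
      min (1 - U t i) (∑ᶠ j ∈ Set.Iio i, (U t j - U (t + 1) j)))
    (hdown : ∀ t i, U (t - 1) i =
      min (1 - U t i) (∑ᶠ j ∈ Set.Ioi i, (U t j - U (t - 1) j)))
    (Y : ℤ → ℤ → ℝ)
    (hY : ∀ t i, Y t i = (∑ᶠ j ∈ Set.Ioi i, U t j) - ∑ᶠ j ∈ Set.Ici i, U (t - 1) j) :
    ∀ t i : ℤ, 0 ≤ Y t i ∧ U t i + U (t - 1) i ≤ 1 ∧
      (0 < Y t i → U t i + U (t - 1) i = 1) := by
  intro t i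
  set S : ℝ := ∑ᶠ j ∈ Set.Ioi i, (U t j - U (t - 1) j) with hS
  have hSsplit : S = (∑ᶠ j ∈ Set.Ioi i, U t j) - ∑ᶠ j ∈ Set.Ioi i, U (t - 1) j :=
    finsum_mem_sub' _ _ ((hfin t).inter_of_right _) ((hfin (t - 1)).inter_of_right _)
  have hIci : ∑ᶠ j ∈ Set.Ici i, U (t - 1) j
      = U (t - 1) i + ∑ᶠ j ∈ Set.Ioi i, U (t - 1) j := by
    have : Set.Ici i = insert i (Set.Ioi i) := by
      ext j; simp [Set.mem_Ici, Set.mem_Ioi, le_iff_lt_or_eq, or_comm, eq_comm]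
    rw [this, finsum_mem_insert' _ (by simp) ((hfin (t - 1)).inter_of_right _)]
  have hYS : Y t i = S - U (t - 1) i := by
    rw [hY, hSsplit, hIci]; ring
  have hd := hdown t i
  rw [← hS] at hd
  rcases le_or_gt S (1 - U t i) with h | h
  · have h1 : U (t - 1) i = S := by rw [hd, min_eq_right h]
    have hY0 : Y t i = 0 := by rw [hYS, h1]; ring
    refine ⟨by rw [hY0], ?_, by intro h'; rw [hY0] at h'; linarith⟩
    rw [h1]; linarith
  · have h1 : U (t - 1) i = 1 - U t i := by rw [hd, min_eq_left h.le]
    constructor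
    · rw [hYS, h1]; linarith
    constructor
    · rw [h1]; ring_nf; exact le_refl 1
    · intro _; rw [h1]; ring
end

section
/- For a udKdV solution with V^t > 1, define X^t_i = ∑_{j≥i}(U^{t+1}_j − U^{t−1}_j) and Y^t_i = ∑_{j>i} U^t_j − ∑_{j≥i} U^{t−1}_j. Then max_i X^t_i = 1 + max_i Y^t_i. -/
/-!
With `A, B, C` the tail sums `∑_{j ≥ i}` of the rows `U^{t+1}, U^t, U^{t-1}` we have
`X_i = A_i - C_i` and `Y_i = B_{i+1} - C_i`, and the downdate rule reads
`U^{t-1}_i = min (1 - U^t_i) (U^{t-1}_i + Y^t_i)`. Hence `Y ≥ 0` and `U^t_i + U^{t-1}_i ≤ 1`,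
with equality wherever `Y^t_i > 0`; far to the left the same rule forces conservation of mass,
so `X` and `Y` vanish outside a bounded window.

Everything rests on `X_{i+1} = U^t_i + U^{t-1}_i + Y^t_i + Y^{t+1}_i`. If `Y^{t+1}_i = 0` this
gives `X_{i+1} ≤ 1 + Y^t_i`; otherwise `U^{t+1}_i + U^t_i = 1` and `X_{i+1} ≤ X_i`. Induction
from the left gives `X ≤ 1 + max Y`. Conversely `V^t > 1` makes `max Y` positive, so at a
maximiser `m` of `Y` we have `U^t_m + U^{t-1}_m = 1` and `X_{m+1} ≥ 1 + max Y`.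
-/

open Filter Function Set

section IntIndexed

variable {M : Type*}

lemma eventually_atBot_eq_zero [Zero M] {f : ℤ → M} (hf : (support f).Finite) :
    ∀ᶠ i in atBot, f i = 0 :=
  (hf.eventually_cofinite_notMem.filter_mono (Int.cofinite_eq ▸ le_sup_left)).mono
    fun _ ↦ notMem_support.1

lemma finite_range_of_eventually_eq_zero [Zero M] {f : ℤ → M}
    (hbot : ∀ᶠ i in atBot, f i = 0) (htop : ∀ᶠ i in atTop, f i = 0) : (range f).Finite := by
  have hsupp : (support f).Finite :=
    eventually_cofinite.1 (Int.cofinite_eq ▸ eventually_sup.2 ⟨hbot, htop⟩)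
  exact ((hsupp.image f).insert 0).subset (range_subset_insert_image_support f)

noncomputable def tailSum [AddCommMonoid M] (f : ℤ → M) (i : ℤ) : M := ∑ᶠ j ∈ Ici i, f j

lemma tailSum_eq_add_tailSum_add_one [AddCommMonoid M] {f : ℤ → M} (hf : (support f).Finite)
    (i : ℤ) : tailSum f i = f i + tailSum f (i + 1) := by
  have hIci : Ici i = insert i (Ici (i + 1)) := by
    ext j; simp only [mem_Ici, mem_insert_iff]; omega
  rw [tailSum, tailSum, hIci, finsum_mem_insert' f (by simp) (hf.inter_of_right _)]

lemma finsum_mem_Ici_sub [AddCommGroup M] {f g : ℤ → M} (hf : (support f).Finite)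
    (hg : (support g).Finite) (i : ℤ) :
    ∑ᶠ j ∈ Ici i, (f j - g j) = tailSum f i - tailSum g i := by
  have hfg : (support fun j ↦ f j - g j).Finite := (hf.union hg).subset (support_sub f g)
  rw [eq_sub_iff_add_eq, tailSum, tailSum,
    ← finsum_mem_add_distrib' (hfg.inter_of_right _) (hg.inter_of_right _)]
  simp

lemma eventually_atTop_tailSum_eq_zero [AddCommMonoid M] {f : ℤ → M} (hf : (support f).Finite) :
    ∀ᶠ i in atTop, tailSum f i = 0 := by
  obtain ⟨b, hb⟩ := hf.bddAbove
  filter_upwards [eventually_gt_atTop b] with i hi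
  refine finsum_mem_eq_zero_of_forall_eq_zero fun j hj ↦ notMem_support.1 fun hfj ↦ ?_
  exact (hb hfj).not_gt (hi.trans_le hj)

lemma eventually_atBot_tailSum_eq_finsum [AddCommMonoid M] {f : ℤ → M}
    (hf : (support f).Finite) : ∀ᶠ i in atBot, tailSum f i = ∑ᶠ j, f j := by
  obtain ⟨b, hb⟩ := hf.bddBelow
  filter_upwards [eventually_le_atBot b] with i hi
  rw [← finsum_mem_univ]
  exact finsum_mem_inter_support_eq' f _ _ fun j hj ↦ by simpa using hi.trans (hb hj)

end IntIndexed

namespace UdKdV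

structure IsDowndateSolution (U : ℤ → ℤ → ℝ) : Prop where
  finite_support : ∀ t, (support (U t)).Finite
  downdate : ∀ t i, U (t - 1) i = min (1 - U t i) (∑ᶠ j ∈ Ioi i, (U t j - U (t - 1) j))

noncomputable def X (U : ℤ → ℤ → ℝ) (t i : ℤ) : ℝ :=
  tailSum (U (t + 1)) i - tailSum (U (t - 1)) i

noncomputable def Y (U : ℤ → ℤ → ℝ) (t i : ℤ) : ℝ :=
  tailSum (U t) (i + 1) - tailSum (U (t - 1)) i

namespace IsDowndateSolution

variable {U : ℤ → ℤ → ℝ} {t i : ℤ} {M : ℝ}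

lemma X_add_one (hU : IsDowndateSolution U) (t i : ℤ) :
    X U t (i + 1) = X U t i + U (t - 1) i - U (t + 1) i := by
  simp only [X, tailSum_eq_add_tailSum_add_one (hU.finite_support _) i]
  ring

lemma Y_add_one (hU : IsDowndateSolution U) (t i : ℤ) :
    Y U t (i + 1) = Y U t i + U (t - 1) i - U t (i + 1) := by
  simp only [Y, tailSum_eq_add_tailSum_add_one (hU.finite_support _) (i + 1),
    tailSum_eq_add_tailSum_add_one (hU.finite_support _) i]
  ring

lemma X_add_one_eq_add_Y_add_Y (hU : IsDowndateSolution U) (t i : ℤ) :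
    X U t (i + 1) = U t i + U (t - 1) i + Y U t i + Y U (t + 1) i := by
  simp only [X, Y, add_sub_cancel_right, tailSum_eq_add_tailSum_add_one (hU.finite_support _) i]
  ring

lemma eq_min_Y (hU : IsDowndateSolution U) (t i : ℤ) :
    U (t - 1) i = min (1 - U t i) (U (t - 1) i + Y U t i) := by
  have h := hU.downdate t i
  rw [← Ici_add_one_eq_Ioi, finsum_mem_Ici_sub (hU.finite_support _) (hU.finite_support _)] at h
  rw [Y, tailSum_eq_add_tailSum_add_one (hU.finite_support (t - 1)) i]
  convert h using 2
  ring

lemma Y_nonneg (hU : IsDowndateSolution U) (t i : ℤ) : 0 ≤ Y U t i := by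
  linarith [hU.eq_min_Y t i, min_le_right (1 - U t i) (U (t - 1) i + Y U t i)]

lemma add_le_one (hU : IsDowndateSolution U) (t i : ℤ) : U t i + U (t - 1) i ≤ 1 := by
  linarith [hU.eq_min_Y t i, min_le_left (1 - U t i) (U (t - 1) i + Y U t i)]

lemma add_eq_one_of_Y_pos (hU : IsDowndateSolution U) (h : 0 < Y U t i) :
    U t i + U (t - 1) i = 1 := by
  have hmin := hU.eq_min_Y t i
  rcases min_choice (1 - U t i) (U (t - 1) i + Y U t i) with hm | hm <;> rw [hm] at hmin <;>
    linarith

lemma eventually_atBot_Y_eq (hU : IsDowndateSolution U) (t : ℤ) :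
    ∀ᶠ i in atBot, Y U t i = ∑ᶠ j, U t j - ∑ᶠ j, U (t - 1) j := by
  filter_upwards [(tendsto_atBot_add_const_right _ 1 tendsto_id).eventually
      (eventually_atBot_tailSum_eq_finsum (hU.finite_support t)),
    eventually_atBot_tailSum_eq_finsum (hU.finite_support (t - 1))] with i hB hC
  rw [Y, ← hC]
  exact congrArg (· - _) hB

lemma eventually_atTop_Y_eq_zero (hU : IsDowndateSolution U) (t : ℤ) :
    ∀ᶠ i in atTop, Y U t i = 0 := by
  filter_upwards [(tendsto_atTop_add_const_right _ 1 tendsto_id).eventually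
      (eventually_atTop_tailSum_eq_zero (hU.finite_support t)),
    eventually_atTop_tailSum_eq_zero (hU.finite_support (t - 1))] with i hB hC
  rw [Y, hC, sub_zero]
  exact hB

-- Far to the left the downdate rule reads `0 = min 1 (∑ U^t - ∑ U^{t-1})`.
lemma finsum_sub_one_eq_finsum (hU : IsDowndateSolution U) (t : ℤ) :
    ∑ᶠ j, U (t - 1) j = ∑ᶠ j, U t j := by
  obtain ⟨i, hY, ht, ht'⟩ := ((hU.eventually_atBot_Y_eq t).and
    ((eventually_atBot_eq_zero (hU.finite_support t)).and
      (eventually_atBot_eq_zero (hU.finite_support (t - 1))))).exists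
  have hmin := hU.eq_min_Y t i
  have hnonneg := hU.Y_nonneg t i
  rw [ht, ht', hY, sub_zero, zero_add] at hmin
  rw [hY] at hnonneg
  rcases min_choice 1 (∑ᶠ j, U t j - ∑ᶠ j, U (t - 1) j) with hm | hm <;> rw [hm] at hmin <;>
    linarith

lemma eventually_atBot_Y_eq_zero (hU : IsDowndateSolution U) (t : ℤ) :
    ∀ᶠ i in atBot, Y U t i = 0 := by
  filter_upwards [hU.eventually_atBot_Y_eq t] with i hi
  rw [hi, hU.finsum_sub_one_eq_finsum, sub_self]

lemma eventually_atBot_X_eq_zero (hU : IsDowndateSolution U) (t : ℤ) :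
    ∀ᶠ i in atBot, X U t i = 0 := by
  filter_upwards [eventually_atBot_tailSum_eq_finsum (hU.finite_support (t + 1)),
    eventually_atBot_tailSum_eq_finsum (hU.finite_support (t - 1))] with i hA hC
  have hmass := hU.finsum_sub_one_eq_finsum (t + 1)
  rw [add_sub_cancel_right] at hmass
  rw [X, hA, hC, ← hmass, hU.finsum_sub_one_eq_finsum, sub_self]

lemma X_add_one_le (hU : IsDowndateSolution U) (t i : ℤ) :
    X U t (i + 1) ≤ max (X U t i) (1 + Y U t i) := by
  rcases (hU.Y_nonneg (t + 1) i).eq_or_lt with hY | hY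
  · refine le_max_of_le_right ?_
    linarith [hU.X_add_one_eq_add_Y_add_Y t i, hU.add_le_one t i]
  · have h := hU.add_eq_one_of_Y_pos hY
    rw [add_sub_cancel_right] at h
    refine le_max_of_le_left ?_
    linarith [hU.X_add_one t i, hU.add_le_one t i]

lemma X_le_one_add (hU : IsDowndateSolution U) (hM : ∀ i, Y U t i ≤ M) (i : ℤ) :
    X U t i ≤ 1 + M := by
  have hM₀ : 0 ≤ M := (hU.Y_nonneg t 0).trans (hM 0)
  obtain ⟨L, hL⟩ := eventually_atBot.1 (hU.eventually_atBot_X_eq_zero t)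
  rcases le_total i L with hi | hi
  · linarith [hL i hi]
  induction i, hi using Int.leInduction with
  | base => linarith [hL L le_rfl]
  | succ n _ ih =>
    exact (hU.X_add_one_le t n).trans (max_le ih (by linarith [hM n]))

lemma Y_pos_of_one_lt (hU : IsDowndateSolution U) (h : 1 < U t i + U t (i + 1)) :
    0 < Y U t i := by
  linarith [hU.Y_add_one t i, hU.Y_nonneg t (i + 1), hU.add_le_one t i]

lemma one_add_Y_le_X_add_one (hU : IsDowndateSolution U) (h : 0 < Y U t i) :
    1 + Y U t i ≤ X U t (i + 1) := by
  linarith [hU.X_add_one_eq_add_Y_add_Y t i, hU.add_eq_one_of_Y_pos h, hU.Y_nonneg (t + 1) i]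

theorem iSup_X_eq (hU : IsDowndateSolution U) (hV : 1 < ⨆ i, (U t i + U t (i + 1))) :
    ⨆ i, X U t i = 1 + ⨆ i, Y U t i := by
  have hfin : (range (Y U t)).Finite :=
    finite_range_of_eventually_eq_zero (hU.eventually_atBot_Y_eq_zero t)
      (hU.eventually_atTop_Y_eq_zero t)
  obtain ⟨m, hm⟩ : ⨆ i, Y U t i ∈ range (Y U t) := (range_nonempty _).csSup_mem hfin
  have hYle : ∀ i, Y U t i ≤ ⨆ i, Y U t i := le_ciSup hfin.bddAbove
  obtain ⟨i₀, hi₀⟩ := exists_lt_of_lt_ciSup hV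
  have hpos : 0 < Y U t m := hm ▸ (hU.Y_pos_of_one_lt hi₀).trans_le (hYle i₀)
  have hXle : ∀ i, X U t i ≤ 1 + ⨆ i, Y U t i := hU.X_le_one_add hYle
  refine le_antisymm (ciSup_le hXle) ?_
  calc 1 + ⨆ i, Y U t i = 1 + Y U t m := by rw [hm]
    _ ≤ X U t (m + 1) := hU.one_add_Y_le_X_add_one hpos
    _ ≤ ⨆ i, X U t i := le_ciSup ⟨_, forall_mem_range.2 hXle⟩ _

end IsDowndateSolution

end UdKdV

theorem stmt_7_general (U : ℤ → ℤ → ℝ)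
    (hfin : ∀ t, (Function.support (U t)).Finite)
    (hdown : ∀ t i, U (t - 1) i =
      min (1 - U t i) (∑ᶠ j ∈ Set.Ioi i, (U t j - U (t - 1) j)))
    (X Y : ℤ → ℤ → ℝ)
    (hX : ∀ t i, X t i = ∑ᶠ j ∈ Set.Ici i, (U (t + 1) j - U (t - 1) j))
    (hY : ∀ t i, Y t i = (∑ᶠ j ∈ Set.Ioi i, U t j) - ∑ᶠ j ∈ Set.Ici i, U (t - 1) j)
    (t : ℤ) (hV : 1 < ⨆ i : ℤ, (U t i + U t (i + 1))) :
    (⨆ i : ℤ, X t i) = 1 + ⨆ i : ℤ, Y t i := by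
  have hXt : X t = UdKdV.X U t := funext fun i ↦ by
    rw [hX, finsum_mem_Ici_sub (hfin _) (hfin _)]
    rfl
  have hYt : Y t = UdKdV.Y U t := funext fun i ↦ by
    rw [hY, ← Ici_add_one_eq_Ioi]
    rfl
  rw [hXt, hYt]
  exact UdKdV.IsDowndateSolution.iSup_X_eq ⟨hfin, hdown⟩ hV

/-- For a finitely supported udKdV solution with `V^t > 1`,
defining `X^t_i = ∑_{j≥i}(U^{t+1}_j − U^{t−1}_j)` and
`Y^t_i = ∑_{j>i} U^t_j − ∑_{j≥i} U^{t−1}_j`, one has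
`max_i X^t_i = 1 + max_i Y^t_i`. -/
theorem stmt_7 (U : ℤ → ℤ → ℝ)
    (hfin : ∀ t, (Function.support (U t)).Finite)
    (hup : ∀ t i, U (t + 1) i =
      min (1 - U t i) (∑ᶠ j ∈ Set.Iio i, (U t j - U (t + 1) j)))
    (hdown : ∀ t i, U (t - 1) i =
      min (1 - U t i) (∑ᶠ j ∈ Set.Ioi i, (U t j - U (t - 1) j)))
    (X Y : ℤ → ℤ → ℝ)
    (hX : ∀ t i, X t i = ∑ᶠ j ∈ Set.Ici i, (U (t + 1) j - U (t - 1) j))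
    (hY : ∀ t i, Y t i = (∑ᶠ j ∈ Set.Ioi i, U t j) - ∑ᶠ j ∈ Set.Ici i, U (t - 1) j)
    (t : ℤ) (hV : 1 < ⨆ i : ℤ, (U t i + U t (i + 1))) :
    (⨆ i : ℤ, X t i) = 1 + ⨆ i : ℤ, Y t i :=
  stmt_7_general U hfin hdown X Y hX hY t hV
end

section
/- For a udKdV solution with V^t > 1, max_i X^t_i = 1 + max_i Y^{t+1}_i, where X^t_i = ∑_{j≥i}(U^{t+1}_j − U^{t−1}_j) and Y^{t+1}_i = ∑_{j>i} U^{t+1}_j − ∑_{j≥i} U^t_j. Combined with max_i X^t_i = 1 + max_i Y^t_i, this implies max_i Y^t_i and max_i X^t_i are independent of t. -/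
/-!
Write `y = Y^{t+1}`, `z = Y^t` and `e_k = U^t_k + U^t_{k+1} - 1`. The update rule makes `y` a
forward and the downdate rule makes `z` a backward Lindley recursion with the same increments:
`y_{k+1} = max (y_k + e_k) 0` and `z_k = max (z_{k+1} + e_k) 0`. Hence `y + z` does not decrease
to the right while `z > 0`, nor to the left while `y > 0`; as both vanish far out,
`y_k + z_k ≤ max y` and `y_k + z_k ≤ max z`, so `max Y^{t+1} = max Y^t`.
Moreover `X^t_i = y_i + z_i + U^t_i + U^{t+1}_i`, where `U^t_i + U^{t+1}_i ≤ 1` with equality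
wherever `y_i > 0`. So `max X^t = 1 + max y` once `max y > 0`, which `V^t > 1` guarantees and
which then holds at all times.
-/

open Set Function Filter

section Finsum

theorem Function.HasFiniteSupport.finite_range {ι M : Type*} [Zero M] {f : ι → M}
    (hf : HasFiniteSupport f) : (range f).Finite :=
  ((hf.image f).insert 0).subset (range_subset_insert_image_support f)

theorem finsum_mem_sub_distrib' {ι G : Type*} [AddCommGroup G] {f g : ι → G}
    (hf : HasFiniteSupport f) (hg : HasFiniteSupport g) (s : Set ι) :
    ∑ᶠ j ∈ s, (f j - g j) = ∑ᶠ j ∈ s, f j - ∑ᶠ j ∈ s, g j := by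
  have hfg : HasFiniteSupport fun j => f j - g j := by fun_prop
  rw [eq_sub_iff_add_eq, ← finsum_mem_add_distrib' (hfg.inter_of_right s) (hg.inter_of_right s)]
  simp only [sub_add_cancel]

variable {α M : Type*} [AddCommMonoid M] {f : α → M}

theorem finsum_mem_Ici_eq_add [PartialOrder α] (hf : HasFiniteSupport f) (i : α) :
    ∑ᶠ j ∈ Ici i, f j = f i + ∑ᶠ j ∈ Ioi i, f j := by
  rw [← Ioi_insert, finsum_mem_insert' (s := Ioi i) _ (lt_irrefl i) (hf.inter_of_right _)]

theorem finsum_mem_Iio_add_finsum_mem_Ici [LinearOrder α] (hf : HasFiniteSupport f) (i : α) :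
    ∑ᶠ j ∈ Iio i, f j + ∑ᶠ j ∈ Ici i, f j = ∑ᶠ j, f j := by
  rw [← finsum_mem_union' (s := Iio i) (t := Ici i) (disjoint_left.2 fun _ h h' => not_le.2 h h')
    (hf.inter_of_right _) (hf.inter_of_right _), Iio_union_Ici, finsum_mem_univ]

end Finsum

section FinsumInt

theorem hasFiniteSupport_iff_eventually_atBot_atTop {M : Type*} [Zero M] {f : ℤ → M} :
    HasFiniteSupport f ↔ (∀ᶠ i in atBot, f i = 0) ∧ ∀ᶠ i in atTop, f i = 0 := by
  rw [← eventually_sup, ← Int.cofinite_eq, eventually_cofinite]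
  rfl

variable {M : Type*} [AddCommMonoid M] {f : ℤ → M}

theorem eventually_atBot_finsum_mem_Iio_eq_zero (hf : HasFiniteSupport f) :
    ∀ᶠ i in atBot, ∑ᶠ j ∈ Iio i, f j = 0 := by
  obtain ⟨m, hm⟩ := eventually_atBot.1 (hasFiniteSupport_iff_eventually_atBot_atTop.1 hf).1
  exact eventually_atBot.2
    ⟨m, fun i hi => finsum_mem_of_eqOn_zero fun j (hj : j < i) => hm j (hj.le.trans hi)⟩

theorem eventually_atTop_finsum_mem_Ici_eq_zero (hf : HasFiniteSupport f) :
    ∀ᶠ i in atTop, ∑ᶠ j ∈ Ici i, f j = 0 := by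
  obtain ⟨m, hm⟩ := eventually_atTop.1 (hasFiniteSupport_iff_eventually_atBot_atTop.1 hf).2
  exact eventually_atTop.2
    ⟨m, fun i hi => finsum_mem_of_eqOn_zero fun j (hj : i ≤ j) => hm j (hi.trans hj)⟩

theorem hasFiniteSupport_finsum_mem_Ici (hf : HasFiniteSupport f) (h0 : ∑ᶠ j, f j = 0) :
    HasFiniteSupport fun i => ∑ᶠ j ∈ Ici i, f j := by
  refine hasFiniteSupport_iff_eventually_atBot_atTop.2
    ⟨(eventually_atBot_finsum_mem_Iio_eq_zero hf).mono fun i hi => ?_,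
      eventually_atTop_finsum_mem_Ici_eq_zero hf⟩
  rwa [← finsum_mem_Iio_add_finsum_mem_Ici hf i, hi, zero_add] at h0

theorem finsum_mem_Iio_sub_eq {f g : ℤ → ℝ} (hf : HasFiniteSupport f) (hg : HasFiniteSupport g)
    (h : ∑ᶠ j, f j = ∑ᶠ j, g j) (i : ℤ) :
    ∑ᶠ j ∈ Iio i, (f j - g j) = ∑ᶠ j ∈ Ici i, g j - ∑ᶠ j ∈ Ici i, f j := by
  rw [finsum_mem_sub_distrib' hf hg]
  linarith [finsum_mem_Iio_add_finsum_mem_Ici hf i, finsum_mem_Iio_add_finsum_mem_Ici hg i]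

end FinsumInt

section Lindley

variable {y z e : ℤ → ℝ}

theorem exists_add_le_of_lindley (hy : ∀ k, y (k + 1) = max (y k + e k) 0)
    (hz : ∀ k, z k = max (z (k + 1) + e k) 0) (hzf : HasFiniteSupport z) (k : ℤ) :
    ∃ m, y k + z k ≤ y m := by
  obtain ⟨N, hkN, hzN⟩ : ∃ N, k ≤ N ∧ z N = 0 := by
    obtain ⟨M, hM⟩ := hzf.bddAbove
    exact ⟨max k (M + 1), le_max_left _ _,
      notMem_support.1 fun h => by linarith [hM h, le_max_right k (M + 1)]⟩
  induction k, hkN using Int.leInductionDown with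
  | base => exact ⟨N, by rw [hzN, add_zero]⟩
  | pred n _ ih =>
    obtain ⟨m, hm⟩ := ih
    have hyn := hy (n - 1)
    have hzn := hz (n - 1)
    rw [sub_add_cancel] at hyn hzn
    rcases max_choice (z n + e (n - 1)) 0 with h | h
    · exact ⟨m, by rw [hzn, h]; linarith [le_max_left (y (n - 1) + e (n - 1)) 0]⟩
    · exact ⟨n - 1, by rw [hzn, h, add_zero]⟩

theorem exists_add_le_of_lindley' (hy : ∀ k, y (k + 1) = max (y k + e k) 0)
    (hz : ∀ k, z k = max (z (k + 1) + e k) 0) (hyf : HasFiniteSupport y) (k : ℤ) :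
    ∃ m, y k + z k ≤ z m := by
  have hy' : ∀ k, z (-(k + 1)) = max (z (-k) + e (-(k + 1))) 0 := fun k => by
    rw [hz, neg_add, neg_add_cancel_right]
  have hz' : ∀ k, y (-k) = max (y (-(k + 1)) + e (-(k + 1))) 0 := fun k => by
    rw [← hy, neg_add, neg_add_cancel_right]
  obtain ⟨m, hm⟩ := exists_add_le_of_lindley (y := fun k => z (-k)) (z := fun k => y (-k)) hy' hz'
    (hyf.comp_of_injective neg_injective) (-k)
  exact ⟨-m, by simpa only [neg_neg, add_comm] using hm⟩

theorem iSup_eq_iSup_of_lindley (hy : ∀ k, y (k + 1) = max (y k + e k) 0)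
    (hz : ∀ k, z k = max (z (k + 1) + e k) 0) (hyf : HasFiniteSupport y)
    (hzf : HasFiniteSupport z) : ⨆ k, y k = ⨆ k, z k := by
  have hy0 : ∀ k, 0 ≤ y k := fun k => by rw [← sub_add_cancel k 1, hy]; exact le_max_right _ _
  have hz0 : ∀ k, 0 ≤ z k := fun k => by rw [hz]; exact le_max_right _ _
  apply le_antisymm
  · refine ciSup_le fun k => ?_
    obtain ⟨m, hm⟩ := exists_add_le_of_lindley' hy hz hyf k
    linarith [hz0 k, le_ciSup hzf.finite_range.bddAbove m]
  · refine ciSup_le fun k => ?_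
    obtain ⟨m, hm⟩ := exists_add_le_of_lindley hy hz hzf k
    linarith [hy0 k, le_ciSup hyf.finite_range.bddAbove m]

end Lindley

theorem eq_max_sub_of_eq_min {p v w : ℝ} (h : v = min p (w + v)) : w = max (w + v - p) 0 := by
  have h₁ : v ≤ p := h.trans_le (min_le_left _ _)
  have h₂ : v ≤ w + v := h.trans_le (min_le_right _ _)
  rcases min_choice p (w + v) with h' | h' <;> rw [h'] at h
  · rw [max_eq_left] <;> linarith
  · rw [max_eq_right] <;> linarith

theorem eq_zero_of_min_one_eq_zero {x : ℝ} (h : min 1 x = 0) : x = 0 := by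
  rcases min_choice 1 x with h' | h' <;> rw [h'] at h
  · exact absurd h one_ne_zero
  · exact h

namespace UdKdV

def IsUpdate (a b : ℤ → ℝ) : Prop :=
  ∀ i, b i = min (1 - a i) (∑ᶠ j ∈ Iio i, (a j - b j))

def IsDowndate (a c : ℤ → ℝ) : Prop :=
  ∀ i, c i = min (1 - a i) (∑ᶠ j ∈ Ioi i, (a j - c j))

/-- `carrier (U (t - 1)) (U t)` is the paper's `Y^t`. -/
noncomputable def carrier (u v : ℤ → ℝ) (i : ℤ) : ℝ :=
  ∑ᶠ j ∈ Ioi i, v j - ∑ᶠ j ∈ Ici i, u j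

section Carrier

variable {u v : ℤ → ℝ}

theorem carrier_add_left (hu : HasFiniteSupport u) (i : ℤ) :
    carrier u v i + u i = ∑ᶠ j ∈ Ioi i, v j - ∑ᶠ j ∈ Ioi i, u j := by
  rw [carrier, finsum_mem_Ici_eq_add hu]
  ring

theorem carrier_add_right (hv : HasFiniteSupport v) (i : ℤ) :
    carrier u v i + v i = ∑ᶠ j ∈ Ici i, v j - ∑ᶠ j ∈ Ici i, u j := by
  rw [carrier, finsum_mem_Ici_eq_add hv]
  ring

theorem carrier_succ_add (hu : HasFiniteSupport u) (hv : HasFiniteSupport v) (i : ℤ) :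
    carrier u v (i + 1) + v (i + 1) = carrier u v i + u i := by
  rw [carrier_add_right hv, carrier_add_left hu, Ici_add_one_eq_Ioi]

theorem hasFiniteSupport_carrier (hu : HasFiniteSupport u) (hv : HasFiniteSupport v)
    (h : ∑ᶠ j, v j = ∑ᶠ j, u j) : HasFiniteSupport (carrier u v) := by
  have hF : HasFiniteSupport fun i => ∑ᶠ j ∈ Ici i, (v j - u j) :=
    hasFiniteSupport_finsum_mem_Ici (by fun_prop) (by rw [finsum_sub_distrib hv hu, h, sub_self])
  have hcarrier : carrier u v = fun i => ∑ᶠ j ∈ Ici i, (v j - u j) - v i := funext fun i => by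
    rw [finsum_mem_sub_distrib' hv hu, ← carrier_add_right hv, add_sub_cancel_right]
  rw [hcarrier]
  fun_prop

end Carrier

section Step

variable {a b c : ℤ → ℝ}

theorem finsum_mem_Ici_sub_eq_carrier (ha : HasFiniteSupport a) (hb : HasFiniteSupport b)
    (hc : HasFiniteSupport c) (i : ℤ) :
    ∑ᶠ j ∈ Ici i, (b j - c j) = carrier a b i + carrier c a i + (a i + b i) := by
  rw [finsum_mem_sub_distrib' hb hc]
  linarith [carrier_add_right (u := a) hb i, carrier_add_right (u := c) ha i]

namespace IsUpdate

theorem finsum_eq (h : IsUpdate a b) (ha : HasFiniteSupport a) (hb : HasFiniteSupport b) :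
    ∑ᶠ j, b j = ∑ᶠ j, a j := by
  have hab : HasFiniteSupport fun j => a j - b j := by fun_prop
  obtain ⟨i, hai, hbi, htail⟩ := ((hasFiniteSupport_iff_eventually_atBot_atTop.1 ha).2.and
    ((hasFiniteSupport_iff_eventually_atBot_atTop.1 hb).2.and
      (eventually_atTop_finsum_mem_Ici_eq_zero hab))).exists
  have hC : ∑ᶠ j ∈ Iio i, (a j - b j) = ∑ᶠ j, a j - ∑ᶠ j, b j := by
    rw [← finsum_sub_distrib ha hb, ← finsum_mem_Iio_add_finsum_mem_Ici hab i, htail, add_zero]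
  have hS := h i
  rw [hai, hbi, hC, sub_zero] at hS
  linarith [eq_zero_of_min_one_eq_zero hS.symm]

theorem eq_min_carrier (h : IsUpdate a b) (ha : HasFiniteSupport a) (hb : HasFiniteSupport b)
    (i : ℤ) : b i = min (1 - a i) (carrier a b i + b i) := by
  rw [carrier_add_right hb, ← finsum_mem_Iio_sub_eq ha hb (h.finsum_eq ha hb).symm]
  exact h i

theorem carrier_nonneg (h : IsUpdate a b) (ha : HasFiniteSupport a) (hb : HasFiniteSupport b)
    (i : ℤ) : 0 ≤ carrier a b i := by
  rw [eq_max_sub_of_eq_min (h.eq_min_carrier ha hb i)]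
  exact le_max_right _ _

theorem carrier_succ (h : IsUpdate a b) (ha : HasFiniteSupport a) (hb : HasFiniteSupport b)
    (i : ℤ) : carrier a b (i + 1) = max (carrier a b i + (a i + a (i + 1) - 1)) 0 := by
  rw [eq_max_sub_of_eq_min (h.eq_min_carrier ha hb (i + 1)), carrier_succ_add ha hb]
  congr 1
  ring

theorem add_le_one (h : IsUpdate a b) (i : ℤ) : a i + b i ≤ 1 := by
  linarith [(h i).trans_le (min_le_left _ _)]

theorem add_eq_one_of_carrier_pos (h : IsUpdate a b) (ha : HasFiniteSupport a)
    (hb : HasFiniteSupport b) {i : ℤ} (hi : 0 < carrier a b i) : a i + b i = 1 := by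
  have hmax := eq_max_sub_of_eq_min (h.eq_min_carrier ha hb i)
  rcases max_choice (carrier a b i + b i - (1 - a i)) 0 with h' | h' <;> rw [h'] at hmax <;>
    linarith

end IsUpdate

namespace IsDowndate

theorem finsum_eq (h : IsDowndate a c) (ha : HasFiniteSupport a) (hc : HasFiniteSupport c) :
    ∑ᶠ j, c j = ∑ᶠ j, a j := by
  have hac : HasFiniteSupport fun j => a j - c j := by fun_prop
  obtain ⟨i, hai, hci, hhead⟩ := ((hasFiniteSupport_iff_eventually_atBot_atTop.1 ha).1.and
    ((hasFiniteSupport_iff_eventually_atBot_atTop.1 hc).1.and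
      (eventually_atBot_finsum_mem_Iio_eq_zero hac))).exists
  have hD : ∑ᶠ j ∈ Ioi i, (a j - c j) = ∑ᶠ j, a j - ∑ᶠ j, c j := by
    rw [← finsum_sub_distrib ha hc, ← finsum_mem_Iio_add_finsum_mem_Ici hac i, hhead, zero_add,
      finsum_mem_Ici_eq_add hac, hai, hci, sub_zero, zero_add]
  have hS := h i
  rw [hai, hci, hD, sub_zero] at hS
  linarith [eq_zero_of_min_one_eq_zero hS.symm]

theorem eq_min_carrier (h : IsDowndate a c) (ha : HasFiniteSupport a) (hc : HasFiniteSupport c)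
    (i : ℤ) : c i = min (1 - a i) (carrier c a i + c i) := by
  rw [carrier_add_left hc, ← finsum_mem_sub_distrib' ha hc]
  exact h i

theorem carrier_nonneg (h : IsDowndate a c) (ha : HasFiniteSupport a) (hc : HasFiniteSupport c)
    (i : ℤ) : 0 ≤ carrier c a i := by
  rw [eq_max_sub_of_eq_min (h.eq_min_carrier ha hc i)]
  exact le_max_right _ _

theorem carrier_eq (h : IsDowndate a c) (ha : HasFiniteSupport a) (hc : HasFiniteSupport c)
    (i : ℤ) : carrier c a i = max (carrier c a (i + 1) + (a i + a (i + 1) - 1)) 0 := by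
  rw [eq_max_sub_of_eq_min (h.eq_min_carrier ha hc i), ← carrier_succ_add hc ha]
  congr 1
  ring

end IsDowndate

theorem iSup_carrier_eq (hab : IsUpdate a b) (hac : IsDowndate a c) (ha : HasFiniteSupport a)
    (hb : HasFiniteSupport b) (hc : HasFiniteSupport c) :
    ⨆ i, carrier a b i = ⨆ i, carrier c a i :=
  iSup_eq_iSup_of_lindley (hab.carrier_succ ha hb) (hac.carrier_eq ha hc)
    (hasFiniteSupport_carrier ha hb (hab.finsum_eq ha hb))
    (hasFiniteSupport_carrier hc ha (hac.finsum_eq ha hc).symm)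

theorem iSup_carrier_pos (hab : IsUpdate a b) (ha : HasFiniteSupport a) (hb : HasFiniteSupport b)
    (hV : 1 < ⨆ i, (a i + a (i + 1))) : 0 < ⨆ i, carrier a b i := by
  obtain ⟨i, hi⟩ := exists_lt_of_lt_ciSup hV
  have hpos : 0 < carrier a b (i + 1) := by
    rw [hab.carrier_succ ha hb]
    exact lt_max_of_lt_left (by linarith [hab.carrier_nonneg ha hb i])
  exact hpos.trans_le
    (le_ciSup (hasFiniteSupport_carrier ha hb (hab.finsum_eq ha hb)).finite_range.bddAbove _)

theorem iSup_finsum_mem_Ici_sub (hab : IsUpdate a b) (hac : IsDowndate a c)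
    (ha : HasFiniteSupport a) (hb : HasFiniteSupport b) (hc : HasFiniteSupport c)
    (hpos : 0 < ⨆ i, carrier a b i) :
    ⨆ i, ∑ᶠ j ∈ Ici i, (b j - c j) = 1 + ⨆ i, carrier a b i := by
  have hyf := hasFiniteSupport_carrier ha hb (hab.finsum_eq ha hb)
  have hle : ∀ i, ∑ᶠ j ∈ Ici i, (b j - c j) ≤ 1 + ⨆ i, carrier a b i := fun i => by
    obtain ⟨m, hm⟩ := exists_add_le_of_lindley (hab.carrier_succ ha hb) (hac.carrier_eq ha hc)
      (hasFiniteSupport_carrier hc ha (hac.finsum_eq ha hc).symm) i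
    linarith [finsum_mem_Ici_sub_eq_carrier ha hb hc i, hab.add_le_one i,
      le_ciSup hyf.finite_range.bddAbove m]
  obtain ⟨i₀, hi₀⟩ := (range_nonempty (carrier a b)).csSup_mem hyf.finite_range
  have hmax : carrier a b i₀ = ⨆ i, carrier a b i := hi₀
  refine le_antisymm (ciSup_le hle) ?_
  calc 1 + ⨆ i, carrier a b i = carrier a b i₀ + (a i₀ + b i₀) := by
        rw [hab.add_eq_one_of_carrier_pos ha hb (hmax ▸ hpos), hmax, add_comm]
    _ ≤ ∑ᶠ j ∈ Ici i₀, (b j - c j) := by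
        linarith [finsum_mem_Ici_sub_eq_carrier ha hb hc i₀, hac.carrier_nonneg ha hc i₀]
    _ ≤ ⨆ i, ∑ᶠ j ∈ Ici i, (b j - c j) := le_ciSup ⟨_, forall_mem_range.2 hle⟩ i₀

end Step

end UdKdV

/-- For a finitely supported udKdV solution with `V^t > 1`,
`max_i X^t_i = 1 + max_i Y^{t+1}_i`. Combined with `max_i X^t_i = 1 + max_i Y^t_i`,
this implies that `max_i Y^t_i` and `max_i X^t_i` are independent of `t`. -/
theorem stmt_8 (U : ℤ → ℤ → ℝ)
    (hfin : ∀ t, (Function.support (U t)).Finite)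
    (hup : ∀ t i, U (t + 1) i =
      min (1 - U t i) (∑ᶠ j ∈ Set.Iio i, (U t j - U (t + 1) j)))
    (hdown : ∀ t i, U (t - 1) i =
      min (1 - U t i) (∑ᶠ j ∈ Set.Ioi i, (U t j - U (t - 1) j)))
    (X Y : ℤ → ℤ → ℝ)
    (hX : ∀ t i, X t i = ∑ᶠ j ∈ Set.Ici i, (U (t + 1) j - U (t - 1) j))
    (hY : ∀ t i, Y t i = (∑ᶠ j ∈ Set.Ioi i, U t j) - ∑ᶠ j ∈ Set.Ici i, U (t - 1) j)
    (t : ℤ) (hV : 1 < ⨆ i : ℤ, (U t i + U t (i + 1))) :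
    ((⨆ i : ℤ, X t i) = 1 + ⨆ i : ℤ, Y (t + 1) i) ∧
    (∀ s s' : ℤ, (⨆ i : ℤ, X s i) = ⨆ i : ℤ, X s' i) ∧
    (∀ s s' : ℤ, (⨆ i : ℤ, Y s i) = ⨆ i : ℤ, Y s' i) := by
  have hYc : ∀ s, Y s = UdKdV.carrier (U (s - 1)) (U s) := fun s => funext (hY s)
  have hstep : ∀ s, ⨆ i, Y (s + 1) i = ⨆ i, Y s i := fun s => by
    rw [hYc, hYc, add_sub_cancel_right]
    exact UdKdV.iSup_carrier_eq (hup s) (hdown s) (hfin s) (hfin (s + 1)) (hfin (s - 1))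
  have hconst : ∀ s, ⨆ i, Y s i = ⨆ i, Y 0 i := fun s => by
    simpa using (show Periodic (fun s => ⨆ i, Y s i) 1 from hstep).int_mul_eq s
  have hpos : ∀ s, 0 < ⨆ i, Y s i := fun s => by
    rw [hconst, ← hconst (t + 1), hYc, add_sub_cancel_right]
    exact UdKdV.iSup_carrier_pos (hup t) (hfin t) (hfin (t + 1)) hV
  have hXs : ∀ s, ⨆ i, X s i = 1 + ⨆ i, Y (s + 1) i := fun s => by
    have hposs := hpos (s + 1)
    rw [hYc, add_sub_cancel_right] at hposs ⊢
    simp only [hX]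
    exact UdKdV.iSup_finsum_mem_Ici_sub (hup s) (hdown s) (hfin s) (hfin (s + 1)) (hfin (s - 1))
      hposs
  exact ⟨hXs t, fun s s' => by rw [hXs, hXs, hconst (s + 1), hconst (s' + 1)],
    fun s s' => by rw [hconst s, hconst s']⟩
end

section
/- For any udKdV solution define ω_max = max_i X^t_i and κ_max = min(1, ω_max). If ΔX^t_i > 0 then U^t_i + U^{t+1}_i < κ_max, and if ΔX^t_i < 0 then U^t_i + U^{t−1}_i < κ_max. -/
/-- For any finitely supported udKdV solution, with
`ω_max = max_i X^t_i` (independent of `t`) and `κ_max = min 1 ω_max`: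
if `ΔX^t_i > 0` then `U^t_i + U^{t+1}_i < κ_max`, and if `ΔX^t_i < 0` then
`U^t_i + U^{t−1}_i < κ_max`. -/
theorem stmt_9 (U : ℤ → ℤ → ℝ)
    (hfin : ∀ t, (Function.support (U t)).Finite)
    (hup : ∀ t i, U (t + 1) i =
      min (1 - U t i) (∑ᶠ j ∈ Set.Iio i, (U t j - U (t + 1) j)))
    (hdown : ∀ t i, U (t - 1) i =
      min (1 - U t i) (∑ᶠ j ∈ Set.Ioi i, (U t j - U (t - 1) j)))
    (X : ℤ → ℤ → ℝ)
    (hX : ∀ t i, X t i = ∑ᶠ j ∈ Set.Ici i, (U (t + 1) j - U (t - 1) j))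
    (ωmax : ℝ) (hω : ∀ t, (⨆ i : ℤ, X t i) = ωmax) :
    ∀ t i : ℤ,
      (X t i < X t (i + 1) → U t i + U (t + 1) i < min 1 ωmax) ∧
      (X t (i + 1) < X t i → U t i + U (t - 1) i < min 1 ωmax) := by
  intro t i
  -- finite union of supports
  have hsupp : (Function.support (U t) ∪ Function.support (U (t + 1)) ∪
      Function.support (U (t - 1))).Finite :=
    ((hfin t).union (hfin (t + 1))).union (hfin (t - 1))
  obtain ⟨a₀, ha₀⟩ := hsupp.bddBelow
  obtain ⟨b₀, hb₀⟩ := hsupp.bddAbove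
  set A : ℤ := min (a₀ - 1) i with hAdef
  set B : ℤ := max (b₀ + 1) (i + 1) with hBdef
  have hAa : A ≤ a₀ - 1 := min_le_left _ _
  have hAi : A ≤ i := min_le_right _ _
  have hBb : b₀ + 1 ≤ B := le_max_left _ _
  have hiB : i + 1 ≤ B := le_max_right _ _
  have hAB : A ≤ B := by omega
  have hzero : ∀ j : ℤ, j ≤ A ∨ B ≤ j →
      U t j = 0 ∧ U (t + 1) j = 0 ∧ U (t - 1) j = 0 := by
    intro j hj
    have hnotmem : j ∉ (Function.support (U t) ∪ Function.support (U (t + 1)) ∪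
        Function.support (U (t - 1))) := by
      intro hmem
      rcases hj with hj | hj
      · have := ha₀ hmem; omega
      · have := hb₀ hmem; omega
    simp only [Set.mem_union, Function.mem_support, not_or, not_not] at hnotmem
    exact ⟨hnotmem.1.1, hnotmem.1.2, hnotmem.2⟩
  -- conversion of the finsums to finite sums over explicit intervals
  have hSconv : ∀ k : ℤ, A ≤ k →
      (∑ᶠ j ∈ Set.Iio k, (U t j - U (t + 1) j))
        = ∑ j ∈ Finset.Ico A k, (U t j - U (t + 1) j) := by
    intro k hk
    apply finsum_mem_eq_sum_of_inter_support_eq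
    ext j
    simp only [Set.mem_inter_iff, Set.mem_Iio, Function.mem_support, Finset.coe_Ico,
      Set.mem_Ico]
    constructor
    · rintro ⟨hjk, hne⟩
      refine ⟨⟨?_, hjk⟩, hne⟩
      by_contra hlt
      push_neg at hlt
      obtain ⟨h1, h2, _⟩ := hzero j (Or.inl (by omega))
      exact hne (by rw [h1, h2]; ring)
    · rintro ⟨⟨_, hjk⟩, hne⟩
      exact ⟨hjk, hne⟩
  have hTconv : ∀ k : ℤ, k ≤ B →
      (∑ᶠ j ∈ Set.Ioi k, (U t j - U (t - 1) j))
        = ∑ j ∈ Finset.Ioc k B, (U t j - U (t - 1) j) := by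
    intro k hk
    apply finsum_mem_eq_sum_of_inter_support_eq
    ext j
    simp only [Set.mem_inter_iff, Set.mem_Ioi, Function.mem_support, Finset.coe_Ioc,
      Set.mem_Ioc]
    constructor
    · rintro ⟨hjk, hne⟩
      refine ⟨⟨hjk, ?_⟩, hne⟩
      by_contra hlt
      push_neg at hlt
      obtain ⟨h1, _, h3⟩ := hzero j (Or.inr (by omega))
      exact hne (by rw [h1, h3]; ring)
    · rintro ⟨⟨hjk, _⟩, hne⟩
      exact ⟨hjk, hne⟩
  have hXconv : ∀ k : ℤ, X t k = ∑ j ∈ Finset.Ico k B, (U (t + 1) j - U (t - 1) j) := by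
    intro k
    rw [hX t k]
    apply finsum_mem_eq_sum_of_inter_support_eq
    ext j
    simp only [Set.mem_inter_iff, Set.mem_Ici, Function.mem_support, Finset.coe_Ico,
      Set.mem_Ico]
    constructor
    · rintro ⟨hjk, hne⟩
      refine ⟨⟨hjk, ?_⟩, hne⟩
      by_contra hlt
      push_neg at hlt
      obtain ⟨_, h2, h3⟩ := hzero j (Or.inr (by omega))
      exact hne (by rw [h2, h3]; ring)
    · rintro ⟨⟨hjk, _⟩, hne⟩
      exact ⟨hjk, hne⟩
  -- mass conservation
  have hM : (∑ j ∈ Finset.Ico A B, (U t j - U (t + 1) j)) = 0 := by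
    have h0 := hup t B
    rw [hSconv B hAB] at h0
    obtain ⟨h1, h2, _⟩ := hzero B (Or.inr le_rfl)
    rw [h1, h2] at h0
    rw [sub_zero] at h0
    rcases le_total (∑ j ∈ Finset.Ico A B, (U t j - U (t + 1) j)) 1 with hle | hle
    · rw [min_eq_right hle] at h0; linarith
    · rw [min_eq_left hle] at h0; linarith
  -- splitting (U^{t+1} - U^{t-1}) pointwise
  have hsplit : ∀ s : Finset ℤ,
      (∑ j ∈ s, (U (t + 1) j - U (t - 1) j))
        = (∑ j ∈ s, (U t j - U (t - 1) j)) - ∑ j ∈ s, (U t j - U (t + 1) j) := by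
    intro s
    rw [← Finset.sum_sub_distrib]
    exact Finset.sum_congr rfl fun j _ => by ring
  -- tail sums of f in terms of head sums
  have hfIco : ∀ k : ℤ, A ≤ k → k ≤ B →
      (∑ j ∈ Finset.Ico k B, (U t j - U (t + 1) j))
        = -∑ j ∈ Finset.Ico A k, (U t j - U (t + 1) j) := by
    intro k h1 h2
    have hu : Finset.Ico A k ∪ Finset.Ico k B = Finset.Ico A B :=
      Finset.Ico_union_Ico_eq_Ico h1 h2
    have hd : Disjoint (Finset.Ico A k) (Finset.Ico k B) :=
      Finset.Ico_disjoint_Ico_consecutive A k B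
    have := Finset.sum_union (f := fun j => U t j - U (t + 1) j) hd
    rw [hu, hM] at this
    linarith
  -- relating Ico and Ioc sums of g
  have hgi1 : (∑ j ∈ Finset.Ico (i + 1) B, (U t j - U (t - 1) j))
      = ∑ j ∈ Finset.Ioc i B, (U t j - U (t - 1) j) := by
    apply Finset.sum_subset
    · intro x hx
      simp only [Finset.mem_Ico, Finset.mem_Ioc] at hx ⊢
      omega
    · intro x hx hnx
      simp only [Finset.mem_Ico, Finset.mem_Ioc] at hx hnx
      have hxB : x = B := by omega
      subst hxB
      obtain ⟨h1, _, h3⟩ := hzero B (Or.inr le_rfl)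
      rw [h1, h3]; ring
  have hgi : (∑ j ∈ Finset.Ico i B, (U t j - U (t - 1) j))
      = (U t i - U (t - 1) i) + ∑ j ∈ Finset.Ioc i B, (U t j - U (t - 1) j) := by
    have hins : Finset.Ico i B = insert i (Finset.Ico (i + 1) B) := by
      ext j
      simp only [Finset.mem_Ico, Finset.mem_insert]
      omega
    rw [hins, Finset.sum_insert (by simp), hgi1]
  have hfsucc : (∑ j ∈ Finset.Ico A (i + 1), (U t j - U (t + 1) j))
      = (∑ j ∈ Finset.Ico A i, (U t j - U (t + 1) j)) + (U t i - U (t + 1) i) := by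
    have hins : Finset.Ico A (i + 1) = insert i (Finset.Ico A i) := by
      ext j
      simp only [Finset.mem_Ico, Finset.mem_insert]
      omega
    rw [hins, Finset.sum_insert (by simp)]
    ring
  -- the two key expressions for X
  have hXi : X t i = (∑ j ∈ Finset.Ico A i, (U t j - U (t + 1) j))
      + (U t i - U (t - 1) i) + ∑ j ∈ Finset.Ioc i B, (U t j - U (t - 1) j) := by
    rw [hXconv i, hsplit, hgi, hfIco i hAi (by omega)]
    ring
  have hXi1 : X t (i + 1) = (∑ j ∈ Finset.Ico A i, (U t j - U (t + 1) j))
      + (U t i - U (t + 1) i) + ∑ j ∈ Finset.Ioc i B, (U t j - U (t - 1) j) := by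
    rw [hXconv (i + 1), hsplit, hgi1, hfIco (i + 1) (by omega) hiB, hfsucc]
    ring
  -- every X t k is at most ωmax
  have hXle : ∀ k : ℤ, X t k ≤ ωmax := by
    intro k
    rw [← hω t]
    refine le_ciSup ?_ k
    have himg : Set.range (X t) ⊆ (X t) '' Set.Icc A B := by
      rintro x ⟨k', rfl⟩
      rcases le_or_gt k' A with hk' | hk'
      · refine ⟨A, ⟨le_rfl, hAB⟩, ?_⟩
        rw [hXconv k', hXconv A]
        apply Finset.sum_subset
        · intro x hx
          simp only [Finset.mem_Ico] at hx ⊢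
          omega
        · intro x hx hnx
          simp only [Finset.mem_Ico] at hx hnx
          obtain ⟨_, h2, h3⟩ := hzero x (Or.inl (by omega))
          rw [h2, h3]; ring
      · rcases le_or_gt B k' with hk2 | hk2
        · refine ⟨B, ⟨hAB, le_rfl⟩, ?_⟩
          rw [hXconv k', hXconv B]
          rw [Finset.Ico_self, Finset.Ico_eq_empty (by omega)]
        · exact ⟨k', ⟨by omega, by omega⟩, rfl⟩
    exact (((Set.finite_Icc A B).image (X t)).bddAbove).mono himg
  -- rewritten evolution equations at site i
  have hupi : U (t + 1) i
      = min (1 - U t i) (∑ j ∈ Finset.Ico A i, (U t j - U (t + 1) j)) := by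
    rw [hup t i, hSconv i hAi]
  have hdowni : U (t - 1) i
      = min (1 - U t i) (∑ j ∈ Finset.Ioc i B, (U t j - U (t - 1) j)) := by
    rw [hdown t i, hTconv i (by omega)]
  constructor
  · -- case ΔX > 0
    intro hlt
    rw [hXi, hXi1] at hlt
    have hmm : U (t + 1) i < U (t - 1) i := by linarith
    rw [hupi, hdowni] at hmm
    have h1 : min (1 - U t i) (∑ j ∈ Finset.Ico A i, (U t j - U (t + 1) j))
        < 1 - U t i := lt_of_lt_of_le hmm (min_le_left _ _)
    have h2 : min (1 - U t i) (∑ j ∈ Finset.Ico A i, (U t j - U (t + 1) j))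
        = ∑ j ∈ Finset.Ico A i, (U t j - U (t + 1) j) := by
      rcases min_cases (1 - U t i) (∑ j ∈ Finset.Ico A i, (U t j - U (t + 1) j)) with
        ⟨he, _⟩ | ⟨he, _⟩
      · rw [he] at h1; linarith
      · exact he
    have h3 : (∑ j ∈ Finset.Ico A i, (U t j - U (t + 1) j))
        < ∑ j ∈ Finset.Ioc i B, (U t j - U (t - 1) j) := by
      rw [h2] at hmm
      exact lt_of_lt_of_le hmm (min_le_right _ _)
    have h5 : U (t + 1) i = ∑ j ∈ Finset.Ico A i, (U t j - U (t + 1) j) := by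
      rw [hupi, h2]
    have h4 := hXle (i + 1)
    rw [h5, lt_min_iff]
    constructor
    · rw [h2] at h1; linarith
    · linarith [hXi1]
  · -- case ΔX < 0
    intro hlt
    rw [hXi, hXi1] at hlt
    have hmm : U (t - 1) i < U (t + 1) i := by linarith
    rw [hupi, hdowni] at hmm
    have h1 : min (1 - U t i) (∑ j ∈ Finset.Ioc i B, (U t j - U (t - 1) j))
        < 1 - U t i := lt_of_lt_of_le hmm (min_le_left _ _)
    have h2 : min (1 - U t i) (∑ j ∈ Finset.Ioc i B, (U t j - U (t - 1) j))
        = ∑ j ∈ Finset.Ioc i B, (U t j - U (t - 1) j) := by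
      rcases min_cases (1 - U t i) (∑ j ∈ Finset.Ioc i B, (U t j - U (t - 1) j)) with
        ⟨he, _⟩ | ⟨he, _⟩
      · rw [he] at h1; linarith
      · exact he
    have h3 : (∑ j ∈ Finset.Ioc i B, (U t j - U (t - 1) j))
        < ∑ j ∈ Finset.Ico A i, (U t j - U (t + 1) j) := by
      rw [h2] at hmm
      exact lt_of_lt_of_le hmm (min_le_right _ _)
    have h5 : U (t - 1) i = ∑ j ∈ Finset.Ioc i B, (U t j - U (t - 1) j) := by
      rw [hdowni, h2]
    have h4 := hXle i
    rw [h5, lt_min_iff]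
    constructor
    · rw [h2] at h1; linarith
    · linarith [hXi]
end

section
/- If ΔX^t_i < 0 then X^{t−1}_i < ω_max, and if ΔX^{t−1}_i > 0 then X^t_{i+1} < ω_max. -/
open Set Function

private lemma support_sub_finite {f g : ℤ → ℝ} (hf : (support f).Finite)
    (hg : (support g).Finite) :
    (support (fun j => f j - g j)).Finite := by
  apply Set.Finite.subset (hf.union hg)
  intro j hj
  simp only [mem_support] at hj
  by_contra h
  simp only [Set.mem_union, mem_support, not_or, not_not] at h
  exact hj (by rw [h.1, h.2, sub_self])

private lemma tail_split {f : ℤ → ℝ} (hf : (support f).Finite) (i : ℤ) :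
    ∑ᶠ j ∈ Set.Ici i, f j = f i + ∑ᶠ j ∈ Set.Ici (i + 1), f j := by
  have h1 : Set.Ici i = insert i (Set.Ici (i + 1)) := by
    ext j
    simp only [Set.mem_Ici, Set.mem_insert_iff]
    omega
  rw [h1, finsum_mem_insert' f (by simp) (hf.inter_of_right _)]

private lemma tail_le {f : ℤ → ℝ} (hf : (support f).Finite) (i : ℤ) :
    ∑ᶠ j ∈ Set.Ici i, f j ≤ ∑ j ∈ hf.toFinset, max (f j) 0 := by
  have h : (Set.Ici i ∩ support f).Finite := hf.inter_of_right _
  rw [finsum_mem_eq_sum f h]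
  calc ∑ j ∈ h.toFinset, f j ≤ ∑ j ∈ h.toFinset, max (f j) 0 :=
        Finset.sum_le_sum (fun j _ => le_max_left _ _)
    _ ≤ ∑ j ∈ hf.toFinset, max (f j) 0 := by
        apply Finset.sum_le_sum_of_subset_of_nonneg
        · intro j hj
          simp only [Set.Finite.mem_toFinset, Set.mem_inter_iff] at hj ⊢
          exact hj.2
        · exact fun j _ _ => le_max_right _ _

/-- For a finitely supported udKdV solution, with
`ω_max = max_i X^t_i` (independent of `t`): if `ΔX^t_i < 0` then
`X^{t−1}_i < ω_max`, and if `ΔX^{t−1}_i > 0` then `X^t_{i+1} < ω_max`. -/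
theorem stmt_10 (U : ℤ → ℤ → ℝ)
    (hfin : ∀ t, (Function.support (U t)).Finite)
    (hup : ∀ t i, U (t + 1) i =
      min (1 - U t i) (∑ᶠ j ∈ Set.Iio i, (U t j - U (t + 1) j)))
    (hdown : ∀ t i, U (t - 1) i =
      min (1 - U t i) (∑ᶠ j ∈ Set.Ioi i, (U t j - U (t - 1) j)))
    (X : ℤ → ℤ → ℝ)
    (hX : ∀ t i, X t i = ∑ᶠ j ∈ Set.Ici i, (U (t + 1) j - U (t - 1) j))
    (ωmax : ℝ) (hω : ∀ t, (⨆ i : ℤ, X t i) = ωmax) :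
    ∀ t i : ℤ,
      (X t (i + 1) < X t i → X (t - 1) i < ωmax) ∧
      (X (t - 1) i < X (t - 1) (i + 1) → X t (i + 1) < ωmax) := by
  have hsub : ∀ a b : ℤ, (support (fun j => U a j - U b j)).Finite :=
    fun a b => support_sub_finite (hfin a) (hfin b)
  -- every X value is at most ωmax
  have hXle : ∀ s k : ℤ, X s k ≤ ωmax := by
    intro s k
    have hb : BddAbove (Set.range (X s)) := by
      refine ⟨∑ j ∈ (hsub (s+1) (s-1)).toFinset, max (U (s+1) j - U (s-1) j) 0, ?_⟩
      rintro x ⟨m, rfl⟩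
      rw [hX]
      exact tail_le (hsub (s+1) (s-1)) m
    have h := le_ciSup hb k
    rwa [hω s] at h
  -- the backward carrier
  set D : ℤ → ℤ → ℝ := fun s k => ∑ᶠ j ∈ Set.Ici k, (U s j - U (s - 1) j) with hDdef
  have hXD : ∀ s k : ℤ, X s k = D (s + 1) k + D s k := by
    intro s k
    rw [hX]
    have hcongr : ∀ j ∈ Set.Ici k, U (s+1) j - U (s-1) j =
        (fun j => U (s+1) j - U s j) j + (fun j => U s j - U (s-1) j) j := fun j _ => by simp
    rw [finsum_mem_congr rfl hcongr,
      finsum_mem_add_distrib' ((hsub (s+1) s).inter_of_right _) ((hsub s (s-1)).inter_of_right _)]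
    have e : s + 1 - 1 = s := by ring
    simp only [hDdef, e]
  have hDrec : ∀ s k : ℤ, D s k = (U s k - U (s - 1) k) + D s (k + 1) := by
    intro s k
    simp only [hDdef]
    exact tail_split (hsub s (s-1)) k
  have hmin : ∀ s k : ℤ, U (s - 1) k = min (1 - U s k) (D s (k + 1)) := by
    intro s k
    rw [hdown s k]
    have h1 : Set.Ioi k = Set.Ici (k + 1) := by
      ext j; simp only [Set.mem_Ioi, Set.mem_Ici]; omega
    simp only [hDdef, h1]
  have hXrec : ∀ s k : ℤ, X s k = (U (s + 1) k - U (s - 1) k) + X s (k + 1) := by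
    intro s k
    rw [hX s k, hX s (k+1)]
    exact tail_split (hsub (s+1) (s-1)) k
  have hUleD : ∀ s k : ℤ, U s k ≤ D s k := by
    intro s k
    have h1 := hDrec s k
    have h2 : U (s - 1) k ≤ D s (k + 1) := by
      rw [hmin s k]; exact min_le_right _ _
    linarith
  have hforce : ∀ s k : ℤ, U s k < D s k → U (s - 1) k = 1 - U s k := by
    intro s k h
    have h1 := hDrec s k
    rcases min_choice (1 - U s k) (D s (k + 1)) with h2 | h2
    · rw [hmin s k, h2]
    · have h3 : U (s - 1) k = D s (k + 1) := by rw [hmin s k, h2]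
      linarith
  intro t i
  constructor
  · -- ΔX^t_i < 0 ⟹ X^{t-1}_i < ωmax
    intro hlt
    have hU : U (t - 1) i < U (t + 1) i := by
      have h1 := hXrec t i
      linarith
    by_cases hcase : D (t - 1) i < D (t + 1) i
    · have e1 : X (t - 1) i = D t i + D (t - 1) i := by
        have h := hXD (t - 1) i
        have e : t - 1 + 1 = t := by ring
        rwa [e] at h
      have e2 := hXD t i
      have h3 := hXle t i
      linarith
    · push_neg at hcase
      have h1 : U (t + 1) i ≤ D (t + 1) i := hUleD (t + 1) i
      have h2 : U (t - 1) i < D (t - 1) i := by linarith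
      have h3 := hforce (t - 1) i h2
      have h4 : U (t + 1) i ≤ 1 - U t i := by
        rw [hup t i]; exact min_le_left _ _
      have h5 := hXrec (t - 1) i
      have e : t - 1 + 1 = t := by ring
      rw [e] at h5
      have h6 := hXle (t - 1) (i + 1)
      linarith
  · -- ΔX^{t-1}_i > 0 ⟹ X^t_{i+1} < ωmax
    intro hlt
    have h0 := hXrec (t - 1) i
    have e : t - 1 + 1 = t := by ring
    rw [e] at h0
    have hU : U t i < U (t - 1 - 1) i := by linarith
    have hm := hmin (t - 1) i
    have hU1 : U t i < 1 - U (t - 1) i :=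
      lt_of_lt_of_le hU (by rw [hm]; exact min_le_left _ _)
    have hU2 : U t i < D (t - 1) (i + 1) :=
      lt_of_lt_of_le hU (by rw [hm]; exact min_le_right _ _)
    by_cases hcase : D (t + 1) (i + 1) < D (t - 1) (i + 1)
    · have e1 := hXD t (i + 1)
      have e2 : X (t - 1) (i + 1) = D t (i + 1) + D (t - 1) (i + 1) := by
        have h := hXD (t - 1) (i + 1)
        rwa [e] at h
      have h3 := hXle (t - 1) (i + 1)
      linarith
    · push_neg at hcase
      have hU3 : U t i < D (t + 1) (i + 1) := lt_of_lt_of_le hU2 hcase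
      have hm2 : U t i = min (1 - U (t + 1) i) (D (t + 1) (i + 1)) := by
        have h := hmin (t + 1) i
        have e2 : t + 1 - 1 = t := by ring
        rwa [e2] at h
      have hU4 : U t i = 1 - U (t + 1) i := by
        rcases min_choice (1 - U (t + 1) i) (D (t + 1) (i + 1)) with h | h
        · rw [hm2, h]
        · rw [hm2, h] at hU3; exact absurd hU3 (lt_irrefl _)
      have h5 := hXrec t i
      have h6 := hXle t i
      linarith
end

section
/- If m is the left-most index of a region where X^t_i is maximal (i.e. X^t_m = ω_max and X^t_m > X^t_{m−1}), then X^{t−1}_{m−1} = ω_max. Similarly if m is the right-most index of a maximal region (X^t_m = ω_max and X^t_m > X^t_{m+1}), then X^{t+1}_{m+1} = ω_max. -/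
open Set Function

private lemma fneg_aux (g : ℤ → ℝ) (s : Set ℤ) : ∑ᶠ j ∈ s, (-g j) = -∑ᶠ j ∈ s, g j := by
  rw [finsum_mem_def, finsum_mem_def, ← finsum_neg_distrib]
  congr 1
  ext j
  by_cases h : j ∈ s <;> simp [h]

private lemma fsub_aux {f g : ℤ → ℝ} (hf : (support f).Finite) (hg : (support g).Finite)
    (s : Set ℤ) :
    ∑ᶠ j ∈ s, (f j - g j) = (∑ᶠ j ∈ s, f j) - ∑ᶠ j ∈ s, g j := by
  simp_rw [sub_eq_add_neg]
  rw [finsum_mem_add_distrib' (hf.subset inter_subset_right)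
      ((hg.subset ?_ : (s ∩ support (fun j => -g j)).Finite)), fneg_aux]
  simp [support]

private lemma fsplit_aux {f : ℤ → ℝ} (hf : (support f).Finite) (i : ℤ) :
    ∑ᶠ j ∈ Set.Ici i, f j = f i + ∑ᶠ j ∈ Set.Ioi i, f j := by
  rw [← finsum_mem_insert' f (by simp) (hf.subset inter_subset_right)]
  congr 1
  ext j
  simp

private lemma ioi_eq_aux (i : ℤ) : Set.Ioi i = Set.Ici (i + 1) := by ext j; simp

/-- For a finitely supported udKdV solution, with
`ω_max = max_i X^t_i` (independent of `t`): if `m` is the left-most index of a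
region where `X^t` is maximal (`X^t_m = ω_max` and `X^t_m > X^t_{m−1}`) then
`X^{t−1}_{m−1} = ω_max`; if `m` is the right-most index of a maximal region
(`X^t_m = ω_max` and `X^t_m > X^t_{m+1}`) then `X^{t+1}_{m+1} = ω_max`. -/
theorem stmt_11 (U : ℤ → ℤ → ℝ)
    (hfin : ∀ t, (Function.support (U t)).Finite)
    (hup : ∀ t i, U (t + 1) i =
      min (1 - U t i) (∑ᶠ j ∈ Set.Iio i, (U t j - U (t + 1) j)))
    (hdown : ∀ t i, U (t - 1) i =
      min (1 - U t i) (∑ᶠ j ∈ Set.Ioi i, (U t j - U (t - 1) j)))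
    (X : ℤ → ℤ → ℝ)
    (hX : ∀ t i, X t i = ∑ᶠ j ∈ Set.Ici i, (U (t + 1) j - U (t - 1) j))
    (ωmax : ℝ) (hω : ∀ t, (⨆ i : ℤ, X t i) = ωmax) :
    ∀ t m : ℤ,
      (X t m = ωmax → X t (m - 1) < X t m → X (t - 1) (m - 1) = ωmax) ∧
      (X t m = ωmax → X t (m + 1) < X t m → X (t + 1) (m + 1) = ωmax) := by
  classical
  have hsub : ∀ a b (s : Set ℤ),
      ∑ᶠ j ∈ s, (U a j - U b j) = (∑ᶠ j ∈ s, U a j) - ∑ᶠ j ∈ s, U b j :=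
    fun a b s => fsub_aux (hfin a) (hfin b) s
  set S : ℤ → ℤ → ℝ := fun a i => ∑ᶠ j ∈ Set.Ici i, U a j with hSdef
  set T : ℤ → ℤ → ℝ := fun a i => ∑ᶠ j ∈ Set.Ioi i, U a j with hTdef
  have hST : ∀ a i, S a i = U a i + T a i := fun a i => fsplit_aux (hfin a) i
  have hTS : ∀ a i b, b = i + 1 → T a i = S a b := by
    intro a i b hb; subst hb
    show ∑ᶠ j ∈ Set.Ioi i, U a j = ∑ᶠ j ∈ Set.Ici (i + 1), U a j
    rw [ioi_eq_aux]
  have hXS : ∀ a b c i, b = a + 1 → c = a - 1 → X a i = S b i - S c i := by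
    intro a b c i hb hc; subst hb; subst hc
    rw [hX, hsub]
  have hBD : ∀ a b i, b = a + 1 → U a i = min (1 - U b i) (T b i - T a i) := by
    intro a b i hb; subst hb
    have h := hdown (a + 1) i
    simp only [add_sub_cancel_right] at h
    rw [hsub] at h
    exact h
  have hYnn : ∀ a b i, b = a + 1 → 0 ≤ T b i - S a i := by
    intro a b i hb
    have h := hBD a b i hb
    have h2 : U a i ≤ T b i - T a i := by rw [h]; exact min_le_right _ _
    have h3 := hST a i
    linarith
  have hUB : ∀ a b i, b = a + 1 → U a i ≤ 1 - U b i := by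
    intro a b i hb
    have h := hBD a b i hb
    rw [h]; exact min_le_left _ _
  have hYz : ∀ a b i, b = a + 1 → U a i + U b i < 1 → T b i - S a i = 0 := by
    intro a b i hb hlt
    have h := hBD a b i hb
    have h3 := hST a i
    rcases min_cases (1 - U b i) (T b i - T a i) with ⟨h1, _⟩ | ⟨h1, _⟩ <;> rw [h1] at h
    · linarith
    · linarith
  have hub : ∀ a i, X a i ≤ ωmax := by
    intro a i
    rw [← hω a]
    have hgs : support (fun j => U (a + 1) j - U (a - 1) j) ⊆
        support (U (a + 1)) ∪ support (U (a - 1)) := by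
      intro j hj
      by_contra hc
      simp only [Set.mem_union, Function.mem_support, not_or, not_not] at hc
      simp [Function.mem_support, hc.1, hc.2] at hj
    have hFg : (support (fun j => U (a + 1) j - U (a - 1) j)).Finite :=
      ((hfin (a + 1)).union (hfin (a - 1))).subset hgs
    refine le_ciSup ⟨∑ j ∈ hFg.toFinset, |U (a + 1) j - U (a - 1) j|, ?_⟩ i
    rintro _ ⟨k, rfl⟩
    rw [hX]
    have hfin2 : (Set.Ici k ∩ support fun j => U (a + 1) j - U (a - 1) j).Finite :=
      hFg.subset inter_subset_right
    rw [← finsum_mem_inter_support (fun j => U (a + 1) j - U (a - 1) j) (Set.Ici k),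
      finsum_mem_eq_finite_toFinset_sum _ hfin2]
    have hsubF : hfin2.toFinset ⊆ hFg.toFinset := by
      intro x hx
      simp only [Set.Finite.mem_toFinset, Set.mem_inter_iff] at hx ⊢
      exact hx.2
    calc ∑ j ∈ hfin2.toFinset, (U (a + 1) j - U (a - 1) j)
        ≤ ∑ j ∈ hfin2.toFinset, |U (a + 1) j - U (a - 1) j| :=
          Finset.sum_le_sum fun j _ => le_abs_self _
      _ ≤ ∑ j ∈ hFg.toFinset, |U (a + 1) j - U (a - 1) j| :=
          Finset.sum_le_sum_of_subset_of_nonneg hsubF fun j _ _ => abs_nonneg _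
  intro t m
  constructor
  · intro hmax hlt
    have e1 : X t m = S (t + 1) m - S (t - 1) m := hXS t _ _ m rfl rfl
    have e2 : X t (m - 1) = S (t + 1) (m - 1) - S (t - 1) (m - 1) := hXS t _ _ (m - 1) rfl rfl
    have e3 : X (t - 1) (m - 1) = S t (m - 1) - S (t - 2) (m - 1) :=
      hXS (t - 1) t (t - 2) (m - 1) (by ring) (by ring)
    have a1 := hST (t + 1) (m - 1)
    have a2 := hST (t - 1) (m - 1)
    have b1 : T (t + 1) (m - 1) = S (t + 1) m := hTS _ _ _ (by ring)
    have b2 : T (t - 1) (m - 1) = S (t - 1) m := hTS _ _ _ (by ring)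
    have hUlt : U (t + 1) (m - 1) < U (t - 1) (m - 1) := by linarith
    have hstrict : U t (m - 1) + U (t + 1) (m - 1) < 1 := by
      by_contra hcon
      push_neg at hcon
      have h1 := hUB t (t + 1) (m - 1) rfl
      have h2 := hUB (t - 1) t (m - 1) (by ring)
      linarith
    have hz : T (t + 1) (m - 1) - S t (m - 1) = 0 := hYz t (t + 1) (m - 1) rfl (by linarith)
    have hnn : 0 ≤ T (t - 1) (m - 1) - S (t - 2) (m - 1) := hYnn (t - 2) (t - 1) (m - 1) (by ring)
    have hle := hub (t - 1) (m - 1)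
    linarith
  · intro hmax hlt
    have e1 : X t m = S (t + 1) m - S (t - 1) m := hXS t _ _ m rfl rfl
    have e2 : X t (m + 1) = S (t + 1) (m + 1) - S (t - 1) (m + 1) := hXS t _ _ (m + 1) rfl rfl
    have e3 : X (t + 1) (m + 1) = S (t + 2) (m + 1) - S t (m + 1) :=
      hXS (t + 1) (t + 2) t (m + 1) (by ring) (by ring)
    have a1 := hST (t + 1) m
    have a2 := hST (t - 1) m
    have b1 : T (t + 1) m = S (t + 1) (m + 1) := hTS _ _ _ rfl
    have b2 : T (t - 1) m = S (t - 1) (m + 1) := hTS _ _ _ rfl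
    have b3 : T (t + 2) m = S (t + 2) (m + 1) := hTS _ _ _ rfl
    have b4 : T t m = S t (m + 1) := hTS _ _ _ rfl
    have hUlt : U (t - 1) m < U (t + 1) m := by linarith
    have hstrict : U (t - 1) m + U t m < 1 := by
      by_contra hcon
      push_neg at hcon
      have h1 := hUB t (t + 1) m rfl
      have h2 := hUB (t - 1) t m (by ring)
      linarith
    have hz : T t m - S (t - 1) m = 0 := hYz (t - 1) t m (by ring) (by linarith)
    have hnn : 0 ≤ T (t + 2) m - S (t + 1) m := hYnn (t + 1) (t + 2) m (by ring)
    have hle := hub (t + 1) (m + 1)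
    linarith
end

section
/- If V^t > 1 and m is a local maximum of X^t with X^t_m > 1, then: (U^t_{m−1} + U^t_m ≥ 1 or U^{t−1}_m + U^t_m = 1) and (U^t_{m−1} + U^t_m ≥ 1 or U^t_{m−1} + U^{t+1}_{m−1} = 1). -/
private lemma ioi_step (f : ℤ → ℝ) (hf : (Function.support f).Finite) (i : ℤ) :
    ∑ᶠ j ∈ Set.Ioi i, f j = f (i + 1) + ∑ᶠ j ∈ Set.Ioi (i + 1), f j := by
  have h : Set.Ioi i = insert (i + 1) (Set.Ioi (i + 1)) := by
    ext x; simp [Set.mem_Ioi]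
  rw [h, finsum_mem_insert' f (by simp) (hf.subset Set.inter_subset_right)]

private lemma ici_step (f : ℤ → ℝ) (hf : (Function.support f).Finite) (i : ℤ) :
    ∑ᶠ j ∈ Set.Ici i, f j = f i + ∑ᶠ j ∈ Set.Ioi i, f j := by
  have h : Set.Ici i = insert i (Set.Ioi i) := by
    ext x; simp [Set.mem_Ioi, le_iff_lt_or_eq, or_comm]
  rw [h, finsum_mem_insert' f (by simp) (hf.subset Set.inter_subset_right)]

/-- For a finitely supported udKdV solution with `V^t > 1`:
if `m` is a local maximum of `X^t` with `X^t_m > 1`, then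
`(U^t_{m−1} + U^t_m ≥ 1 or U^{t−1}_m + U^t_m = 1)` and
`(U^t_{m−1} + U^t_m ≥ 1 or U^t_{m−1} + U^{t+1}_{m−1} = 1)`. -/
theorem stmt_12 (U : ℤ → ℤ → ℝ)
    (hfin : ∀ t, (Function.support (U t)).Finite)
    (hup : ∀ t i, U (t + 1) i =
      min (1 - U t i) (∑ᶠ j ∈ Set.Iio i, (U t j - U (t + 1) j)))
    (hdown : ∀ t i, U (t - 1) i =
      min (1 - U t i) (∑ᶠ j ∈ Set.Ioi i, (U t j - U (t - 1) j)))
    (X : ℤ → ℤ → ℝ)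
    (hX : ∀ t i, X t i = ∑ᶠ j ∈ Set.Ici i, (U (t + 1) j - U (t - 1) j))
    (t m : ℤ)
    (hV : 1 < ⨆ i : ℤ, (U t i + U t (i + 1)))
    (hloc1 : X t (m - 1) ≤ X t m) (hloc2 : X t (m + 1) ≤ X t m)
    (hgt1 : 1 < X t m) :
    (1 ≤ U t (m - 1) + U t m ∨ U (t - 1) m + U t m = 1) ∧
    (1 ≤ U t (m - 1) + U t m ∨ U t (m - 1) + U (t + 1) (m - 1) = 1) := by
  -- finite supports of differences
  have hsub : ∀ a b : ℤ, (Function.support fun j => U a j - U b j).Finite := by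
    intro a b
    refine Set.Finite.subset ((hfin a).union (hfin b)) ?_
    intro x hx
    simp only [Function.mem_support] at hx
    by_contra hmem
    simp only [Set.mem_union, Function.mem_support, not_or, not_not] at hmem
    exact hx (by rw [hmem.1, hmem.2, sub_self])
  have ht1 : t + 1 - 1 = t := by ring
  -- the two tail sums
  set P : ℤ → ℝ := fun i => ∑ᶠ j ∈ Set.Ioi i, (U t j - U (t - 1) j) with hPdef
  set Q : ℤ → ℝ := fun i => ∑ᶠ j ∈ Set.Ioi i, (U (t + 1) j - U t j) with hQdef
  have hP : ∀ i, U (t - 1) i = min (1 - U t i) (P i) := fun i => hdown t i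
  have hQ : ∀ i, U t i = min (1 - U (t + 1) i) (Q i) := by
    intro i
    have := hdown (t + 1) i
    rw [ht1] at this
    exact this
  have Prec : ∀ i, P i = (U t (i + 1) - U (t - 1) (i + 1)) + P (i + 1) := by
    intro i; exact ioi_step _ (hsub t (t - 1)) i
  have Qrec : ∀ i, Q i = (U (t + 1) (i + 1) - U t (i + 1)) + Q (i + 1) := by
    intro i; exact ioi_step _ (hsub (t + 1) t) i
  have Xdec : ∀ i, X t i = (U (t + 1) i - U (t - 1) i) + Q i + P i := by
    intro i
    rw [hX t i, ici_step _ (hsub (t + 1) (t - 1)) i]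
    have hsplit : ∑ᶠ j ∈ Set.Ioi i, (U (t + 1) j - U (t - 1) j)
        = (∑ᶠ j ∈ Set.Ioi i, (U (t + 1) j - U t j))
          + ∑ᶠ j ∈ Set.Ioi i, (U t j - U (t - 1) j) := by
      rw [← finsum_mem_add_distrib' ((hsub (t + 1) t).subset Set.inter_subset_right)
        ((hsub t (t - 1)).subset Set.inter_subset_right)]
      apply finsum_mem_congr rfl
      intro x _; ring
    rw [hsplit]; ring
  -- local max translated to single-site inequalities
  have hm1 : m - 1 + 1 = m := by ring
  have hloc1' : U (t + 1) (m - 1) ≤ U (t - 1) (m - 1) := by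
    have h1 := Xdec (m - 1)
    have h2 := Xdec m
    have h3 := Prec (m - 1)
    have h4 := Qrec (m - 1)
    rw [hm1] at h3 h4
    linarith [hloc1]
  have hloc2' : U (t - 1) m ≤ U (t + 1) m := by
    have h1 := Xdec m
    have h2 := Xdec (m + 1)
    have h3 := Prec m
    have h4 := Qrec m
    linarith [hloc2]
  by_cases hA : 1 ≤ U t (m - 1) + U t m
  · exact ⟨Or.inl hA, Or.inl hA⟩
  push_neg at hA
  have hPle : ∀ i, U (t - 1) i ≤ P i := fun i => (hP i) ▸ min_le_right _ _
  have hQle : ∀ i, U t i ≤ Q i := fun i => (hQ i) ▸ min_le_right _ _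
  have hPle1 : ∀ i, U (t - 1) i ≤ 1 - U t i := fun i => (hP i) ▸ min_le_left _ _
  have hQle1 : ∀ i, U t i ≤ 1 - U (t + 1) i := fun i => (hQ i) ▸ min_le_left _ _
  constructor
  · -- first conclusion : U (t-1) m + U t m = 1
    right
    by_contra h1
    -- then the min at site m takes the P branch
    have hPm : U (t - 1) m = P m := by
      rcases min_choice (1 - U t m) (P m) with h | h
      · exact absurd (by rw [hP m, h]; ring) h1
      · rw [hP m, h]
    -- X t m = U(t+1) m + Q m > 1, so Q m > U t m
    have hQm : U t m < Q m := by
      have h2 := Xdec m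
      have := hQle1 m
      nlinarith [hgt1]
    -- hence U t m = 1 - U(t+1) m
    have hUm : U t m = 1 - U (t + 1) m := by
      rcases min_choice (1 - U (t + 1) m) (Q m) with h | h
      · rw [hQ m, h]
      · exfalso; rw [hQ m, h] at hQm; exact lt_irrefl _ hQm
    -- Q (m-1) > U t (m-1)
    have hQm1 : U t (m - 1) < Q (m - 1) := by
      have h4 := Qrec (m - 1)
      rw [hm1] at h4
      linarith
    have hUm1 : U t (m - 1) = 1 - U (t + 1) (m - 1) := by
      rcases min_choice (1 - U (t + 1) (m - 1)) (Q (m - 1)) with h | h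
      · rw [hQ (m - 1), h]
      · exfalso; rw [hQ (m - 1), h] at hQm1; exact lt_irrefl _ hQm1
    -- P (m-1) = U t m, and chain of inequalities gives contradiction
    have h3 := Prec (m - 1)
    rw [hm1] at h3
    have := hPle (m - 1)
    linarith [hloc1']
  · -- second conclusion : U t (m-1) + U (t+1) (m-1) = 1
    right
    by_contra h2
    have hQm1 : U t (m - 1) = Q (m - 1) := by
      rcases min_choice (1 - U (t + 1) (m - 1)) (Q (m - 1)) with h | h
      · exact absurd (by rw [hQ (m - 1), h]; ring) h2
      · rw [hQ (m - 1), h]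
    have h4 := Qrec (m - 1)
    rw [hm1] at h4
    -- Q m = U t (m-1) + U t m - U (t+1) m, so U (t+1) m ≤ U t (m-1)
    have hQm : Q m = U t (m - 1) + U t m - U (t + 1) m := by linarith
    have hub : U (t + 1) m ≤ U t (m - 1) := by
      have := hQle m; linarith
    -- X t m > 1 forces P m > U (t-1) m
    have hPm : U (t - 1) m < P m := by
      have h1 := Xdec m
      linarith [hgt1]
    have hUm : U (t - 1) m = 1 - U t m := by
      rcases min_choice (1 - U t m) (P m) with h | h
      · rw [hP m, h]
      · exfalso; rw [hP m, h] at hPm; exact lt_irrefl _ hPm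
    linarith [hloc2']
end
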